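/- arXiv:2010.14071 — 8 statements merged into one kernel-verified Lean document; each statement's English description precedes it below -/
import Mathlib

section
/- Let $t_0 < t_1$, $\lambda > 0$, $\kappa \in \mathbb{R}$, and let $y \in C^1([t_0,t_1])$ satisfy $\dot y(t) \le \lambda(\kappa - y(t))$ for all $t \in (t_0,t_1)$ such that $y(t) > \kappa$. Then for all $t \in [t_0,t_1]$, $y(t) \le \max(\kappa, y(t_0)) e^{-\lambda(t-t_0)} + (1 - e^{-\lambda(t-t_0)})\kappa$. -/
/-- Gronwall-type comparison lemma (upper bound): if `y ∈ C¹([t₀,t₁])` satisfies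
`y'(t) ≤ λ(κ - y(t))` whenever `y(t) > κ` on `(t₀,t₁)`, then
`y(t) ≤ max(κ, y(t₀)) e^{-λ(t-t₀)} + (1 - e^{-λ(t-t₀)}) κ` on `[t₀,t₁]`. -/
theorem gronwall_upper (t0 t1 lam kappa : ℝ) (ht : t0 < t1) (hlam : 0 < lam)
    (y : ℝ → ℝ) (hy : ContDiffOn ℝ 1 y (Set.Icc t0 t1))
    (hineq : ∀ t ∈ Set.Ioo t0 t1, kappa < y t →
      derivWithin y (Set.Icc t0 t1) t ≤ lam * (kappa - y t)) :
    ∀ t ∈ Set.Icc t0 t1,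
      y t ≤ max kappa (y t0) * Real.exp (-lam * (t - t0)) +
        (1 - Real.exp (-lam * (t - t0))) * kappa := by
  intro t htmem
  set M := max kappa (y t0) with hM
  -- key estimate with ε
  have key : ∀ ε : ℝ, 0 < ε →
      y t ≤ kappa + (M - kappa + ε) * Real.exp (-lam * (t - t0)) + ε * (t - t0) := by
    intro ε hε
    set B : ℝ → ℝ := fun s => kappa + (M - kappa + ε) * Real.exp (-lam * (s - t0)) + ε * (s - t0)
      with hB
    set B' : ℝ → ℝ := fun s => (M - kappa + ε) * (-lam * Real.exp (-lam * (s - t0))) + ε with hB'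
    have hBderiv : ∀ s, HasDerivAt B (B' s) s := by
      intro s
      have h1 : HasDerivAt (fun s : ℝ => -lam * (s - t0)) (-lam) s := by
        simpa using ((hasDerivAt_id s).sub_const t0).const_mul (-lam)
      have h2 : HasDerivAt (fun s : ℝ => Real.exp (-lam * (s - t0)))
          (Real.exp (-lam * (s - t0)) * (-lam)) s := (Real.hasDerivAt_exp _).comp s h1
      have h3 : HasDerivAt (fun s : ℝ => ε * (s - t0)) ε s := by
        simpa using ((hasDerivAt_id s).sub_const t0).const_mul ε
      have := (((h2.const_mul (M - kappa + ε)).const_add kappa).add h3)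
      have e : B' s = (M - kappa + ε) * (Real.exp (-lam * (s - t0)) * -lam) + ε := by
        simp only [hB']; ring
      rw [e]; exact this
    have hfC : ContinuousOn y (Set.Icc t0 t1) := hy.continuousOn
    have hf' : ∀ x ∈ Set.Ico t0 t1,
        HasDerivWithinAt y (derivWithin y (Set.Icc t0 t1) x) (Set.Ici x) x := by
      intro x hx
      have hx' : x ∈ Set.Icc t0 t1 := Set.mem_Icc_of_Ico hx
      have hd : DifferentiableWithinAt ℝ y (Set.Icc t0 t1) x :=
        (hy.differentiableOn one_ne_zero) x hx'
      exact hd.hasDerivWithinAt.mono_of_mem_nhdsWithin (Icc_mem_nhdsGE_of_mem hx)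
    have hεc : 0 < M - kappa + ε := by
      have : kappa ≤ M := le_max_left _ _
      linarith
    have ha : y t0 ≤ B t0 := by
      have : y t0 ≤ M := le_max_right _ _
      simp only [hB, sub_self, mul_zero, neg_mul, neg_zero, Real.exp_zero, mul_one]
      linarith
    have bound : ∀ x ∈ Set.Ico t0 t1, y x = B x →
        derivWithin y (Set.Icc t0 t1) x < B' x := by
      intro x hx hyx
      have hexp : 0 < Real.exp (-lam * (x - t0)) := Real.exp_pos _
      have hεx : 0 ≤ ε * (x - t0) := mul_nonneg hε.le (by linarith [hx.1])
      have hκB : kappa < B x := by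
        have : 0 < (M - kappa + ε) * Real.exp (-lam * (x - t0)) := mul_pos hεc hexp
        simp only [hB]; linarith
      rcases eq_or_lt_of_le hx.1 with h0 | h0
      · exfalso
        rw [← h0] at hyx
        have : y t0 ≤ M := le_max_right _ _
        rw [hyx] at this
        simp only [hB, ← h0, sub_self, mul_zero, neg_mul, neg_zero, Real.exp_zero, mul_one] at this
        linarith
      · have hxIoo : x ∈ Set.Ioo t0 t1 := ⟨h0, hx.2⟩
        have hgt : kappa < y x := by rw [hyx]; exact hκB
        have h1 := hineq x hxIoo hgt
        have h2 : lam * (kappa - y x) < B' x := by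
          rw [hyx]
          have hBx : lam * (kappa - B x)
              = -(lam * ((M - kappa + ε) * Real.exp (-lam * (x - t0)))) - lam * (ε * (x - t0)) := by
            simp only [hB]; ring
          have h4 : 0 ≤ lam * (ε * (x - t0)) := mul_nonneg hlam.le hεx
          simp only [hB']
          nlinarith
        exact lt_of_le_of_lt h1 h2
    have := image_le_of_deriv_right_lt_deriv_boundary hfC hf' ha hBderiv bound htmem
    simpa [hB] using this
  -- pass to the limit ε → 0
  have hgoal : y t ≤ kappa + (M - kappa) * Real.exp (-lam * (t - t0)) := by
    refine le_of_forall_pos_le_add ?_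
    intro ε hε
    have hden : 0 < 1 + (t1 - t0) := by linarith
    have hε' : 0 < ε / (1 + (t1 - t0)) := div_pos hε hden
    have h := key _ hε'
    have hexp1 : Real.exp (-lam * (t - t0)) ≤ 1 := by
      apply Real.exp_le_one_iff.mpr
      have : 0 ≤ t - t0 := by linarith [htmem.1]
      nlinarith
    have hexp0 : 0 < Real.exp (-lam * (t - t0)) := Real.exp_pos _
    have htb : t - t0 ≤ t1 - t0 := by linarith [htmem.2]
    have ht0 : 0 ≤ t - t0 := by linarith [htmem.1]
    have hsmall : ε / (1 + (t1 - t0)) * Real.exp (-lam * (t - t0))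
        + ε / (1 + (t1 - t0)) * (t - t0) ≤ ε := by
      have : ε / (1 + (t1 - t0)) * (1 + (t1 - t0)) = ε := div_mul_cancel₀ ε hden.ne'
      nlinarith [hε'.le]
    nlinarith
  have hexp1 : Real.exp (-lam * (t - t0)) ≤ 1 := by
    apply Real.exp_le_one_iff.mpr
    have : 0 ≤ t - t0 := by linarith [htmem.1]
    nlinarith
  nlinarith [hgoal]
end

section
/- Let $t_0 < t_1$, $\lambda > 0$, $\kappa \in \mathbb{R}$, and let $y \in C^1([t_0,t_1])$ satisfy $\dot y(t) \ge \lambda(\kappa - y(t))$ for all $t \in (t_0,t_1)$ such that $y(t) < \kappa$. Then for all $t \in [t_0,t_1]$, $y(t) \ge \min(\kappa, y(t_0)) e^{-\lambda(t-t_0)} + (1 - e^{-\lambda(t-t_0)})\kappa$. -/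
/-- Gronwall-type comparison lemma (lower bound): if `y ∈ C¹([t₀,t₁])` satisfies
`y'(t) ≥ λ(κ - y(t))` whenever `y(t) < κ` on `(t₀,t₁)`, then
`y(t) ≥ min(κ, y(t₀)) e^{-λ(t-t₀)} + (1 - e^{-λ(t-t₀)}) κ` on `[t₀,t₁]`. -/
theorem gronwall_lower (t0 t1 lam kappa : ℝ) (ht : t0 < t1) (hlam : 0 < lam)
    (y : ℝ → ℝ) (hy : ContDiffOn ℝ 1 y (Set.Icc t0 t1))
    (hineq : ∀ t ∈ Set.Ioo t0 t1, y t < kappa →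
      lam * (kappa - y t) ≤ derivWithin y (Set.Icc t0 t1) t) :
    ∀ t ∈ Set.Icc t0 t1,
      min kappa (y t0) * Real.exp (-lam * (t - t0)) +
        (1 - Real.exp (-lam * (t - t0))) * kappa ≤ y t := by
  set m := min kappa (y t0) with hm
  have hmk : m ≤ kappa := min_le_left _ _
  have hmy : m ≤ y t0 := min_le_right _ _
  -- key: for every ε > 0, y t ≥ κ + (m-κ) e^{-λ(t-t₀)} - ε (t - t₀ + 1)
  have key : ∀ ε > 0, ∀ t ∈ Set.Icc t0 t1,
      kappa + (m - kappa) * Real.exp (-lam * (t - t0)) - ε * (t - t0 + 1) ≤ y t := by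
    intro ε hε t htmem
    set B : ℝ → ℝ := fun s =>
      -(kappa + (m - kappa) * Real.exp (-lam * (s - t0)) - ε * (s - t0 + 1)) with hB
    set B' : ℝ → ℝ := fun s =>
      -((m - kappa) * (Real.exp (-lam * (s - t0)) * -lam) - ε) with hB'
    have hBderiv : ∀ s, HasDerivAt B (B' s) s := by
      intro s
      have h1 : HasDerivAt (fun s : ℝ => -lam * (s - t0)) (-lam) s := by
        simpa using (((hasDerivAt_id s).sub_const t0).const_mul (-lam))
      have h2 : HasDerivAt (fun s : ℝ => Real.exp (-lam * (s - t0)))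
          (Real.exp (-lam * (s - t0)) * (-lam)) s := h1.exp
      have h3 : HasDerivAt (fun s : ℝ => ε * (s - t0 + 1)) ε s := by
        simpa using ((((hasDerivAt_id s).sub_const t0).add_const 1).const_mul ε)
      exact (((h2.const_mul (m - kappa)).const_add kappa).sub h3).neg
    have hfcont : ContinuousOn (fun s => -y s) (Set.Icc t0 t1) := hy.continuousOn.neg
    have hfderiv : ∀ x ∈ Set.Ico t0 t1,
        HasDerivWithinAt (fun s => -y s) (-(derivWithin y (Set.Icc t0 t1) x))
          (Set.Ici x) x := by
      intro x hx
      have hdiff : DifferentiableWithinAt ℝ y (Set.Icc t0 t1) x :=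
        (hy.differentiableOn one_ne_zero) x ⟨hx.1, hx.2.le⟩
      have h1 : HasDerivWithinAt y (derivWithin y (Set.Icc t0 t1) x) (Set.Icc t0 t1) x :=
        hdiff.hasDerivWithinAt
      have hmem : Set.Icc t0 t1 ∈ nhdsWithin x (Set.Ici x) :=
        Icc_mem_nhdsGE_of_mem ⟨hx.1, hx.2⟩
      exact (h1.mono_of_mem_nhdsWithin hmem).neg
    have ha : -y t0 ≤ B t0 := by
      simp only [B, sub_self, mul_zero, neg_mul, neg_zero, Real.exp_zero, mul_one,
        zero_add]
      have : kappa + (m - kappa) - ε ≤ y t0 := by linarith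
      linarith
    have bound : ∀ x ∈ Set.Ico t0 t1, -y x = B x →
        -(derivWithin y (Set.Icc t0 t1) x) < B' x := by
      intro x hx hcontact
      have hs0 : 0 ≤ x - t0 := by linarith [hx.1]
      have hexp_pos : 0 < Real.exp (-lam * (x - t0)) := Real.exp_pos _
      have hexp_le : Real.exp (-lam * (x - t0)) ≤ 1 := by
        apply Real.exp_le_one_iff.mpr
        nlinarith
      have hyx : y x = kappa + (m - kappa) * Real.exp (-lam * (x - t0))
          - ε * (x - t0 + 1) := by
        have := hcontact
        simp only [B] at this
        linarith
      have hylt : y x < kappa := by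
        have h1 : (m - kappa) * Real.exp (-lam * (x - t0)) ≤ 0 :=
          mul_nonpos_of_nonpos_of_nonneg (by linarith) hexp_pos.le
        nlinarith
      have hxne : x ≠ t0 := by
        intro h
        rw [h] at hyx
        simp [Real.exp_zero] at hyx
        linarith
      have hxIoo : x ∈ Set.Ioo t0 t1 := ⟨lt_of_le_of_ne hx.1 (Ne.symm hxne), hx.2⟩
      have hd := hineq x hxIoo hylt
      have : lam * (kappa - y x)
          = -((m - kappa) * Real.exp (-lam * (x - t0))) * lam + lam * ε * (x - t0 + 1) := by
        rw [hyx]; ring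
      have hB'x : B' x = (m - kappa) * Real.exp (-lam * (x - t0)) * lam + ε := by
        simp [B']; ring
      nlinarith [hd, mul_pos hlam hε, mul_nonneg (mul_pos hlam hε).le hs0]
    have := image_le_of_deriv_right_lt_deriv_boundary hfcont hfderiv ha hBderiv bound htmem
    simp only [B] at this
    linarith
  intro t htmem
  have hpos : 0 < t - t0 + 1 := by linarith [htmem.1]
  have goal_eq : min kappa (y t0) * Real.exp (-lam * (t - t0)) +
      (1 - Real.exp (-lam * (t - t0))) * kappa
      = kappa + (m - kappa) * Real.exp (-lam * (t - t0)) := by ring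
  rw [goal_eq]
  refine le_of_forall_pos_le_add ?_
  intro ε hε
  have h := key (ε / (t - t0 + 1)) (by positivity) t htmem
  have h2 : ε / (t - t0 + 1) * (t - t0 + 1) = ε := by field_simp
  linarith [h, h2]
end

section
/- Consider the delay system $\dot x_i(t) = \sum_{j \ne i} \psi_{ij}(t)(x_j(t-\tau) - x_i(t))$ for $i = 1,\dots,N$, $x_i(t) \in \mathbb{R}$, with delay $\tau > 0$, nonnegative continuous weights $\psi_{ij}(t) \ge 0$ satisfying $\sum_{j \ne i} \psi_{ij}(t) \le 1$ for all $i$ and $t \ge 0$, and continuous initial data $x_i(s) = x_i^0(s)$ for $s \in [-\tau, 0]$. Set $m := \min_i \min_{s \in [-\tau,0]} x_i(s)$ and $M := \max_i \max_{s \in [-\tau,0]} x_i(s)$. Then along any solution, $m \le x_i(t) \le M$ for all $i$ and all $t \ge 0$. -/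
open Set Filter
open scoped Topology

/-- One-sided invariance: if all opinions are `≤ M` on the initial interval, they remain so. -/
lemma HK_delay_upper (N : ℕ) (τ : ℝ) (hτ : 0 < τ)
    (x : Fin N → ℝ → ℝ) (ψ : Fin N → Fin N → ℝ → ℝ)
    (hxcont : ∀ i, ContinuousOn (x i) (Set.Ici (-τ)))
    (hψcont : ∀ i j, Continuous (ψ i j))
    (hψnn : ∀ i j t, 0 ≤ t → 0 ≤ ψ i j t)
    (hode : ∀ (i : Fin N) (t : ℝ), 0 < t → HasDerivAt (x i)
      (∑ j ∈ Finset.univ.erase i, ψ i j t * (x j (t - τ) - x i t)) t)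
    (M : ℝ) (hM0 : ∀ i : Fin N, ∀ s ∈ Set.Icc (-τ) 0, x i s ≤ M) :
    ∀ (i : Fin N) (t : ℝ), 0 ≤ t → x i t ≤ M := by
  -- the right-hand side of the ODE
  set g : Fin N → ℝ → ℝ := fun i t => ∑ j ∈ Finset.univ.erase i, ψ i j t * (x j (t - τ) - x i t)
    with hg
  have hgcont : ∀ i, ContinuousOn (g i) (Set.Ici 0) := by
    intro i
    apply continuousOn_finset_sum
    intro j _
    apply ContinuousOn.mul ((hψcont i j).continuousOn)
    apply ContinuousOn.sub
    · have h1 : ContinuousOn (fun t : ℝ => t - τ) (Set.Ici 0) :=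
        (continuous_sub_right τ).continuousOn
      apply ContinuousOn.comp (hxcont j) h1
      intro t ht
      simp only [Set.mem_Ici] at ht ⊢
      linarith
    · exact (hxcont i).mono (fun t ht => by simp only [Set.mem_Ici] at ht ⊢; linarith)
  -- right derivative everywhere on [0,∞), including at 0
  have hderivW : ∀ i : Fin N, ∀ t : ℝ, 0 ≤ t → HasDerivWithinAt (x i) (g i t) (Set.Ici t) t := by
    intro i t ht
    rcases ht.lt_or_eq with ht' | ht'
    · exact (hode i t ht').hasDerivWithinAt
    · subst ht'
      apply hasDerivWithinAt_Ici_of_tendsto_deriv (s := Set.Ioi (0:ℝ))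
      · intro z hz
        exact (hode i z hz).differentiableAt.differentiableWithinAt
      · exact ((hxcont i 0 (by simp only [Set.mem_Ici]; linarith)).mono
          (fun z hz => by simp only [Set.mem_Ici, Set.mem_Ioi] at hz ⊢; linarith))
      · exact self_mem_nhdsWithin
      · have h1 : Tendsto (g i) (𝓝[>] (0:ℝ)) (𝓝 (g i 0)) := by
          have := (hgcont i 0 (by simp)).tendsto
          exact this.mono_left (nhdsWithin_mono _ (fun z (hz : 0 < z) => (le_of_lt hz : 0 ≤ z)))
        apply h1.congr'
        filter_upwards [self_mem_nhdsWithin] with z hz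
        exact ((hode i z hz).deriv).symm
  -- the key step: propagation over an interval of length τ
  have step : ∀ a : ℝ, 0 ≤ a → (∀ j : Fin N, ∀ s ∈ Set.Icc (-τ) a, x j s ≤ M) →
      ∀ i : Fin N, ∀ t ∈ Set.Icc a (a + τ), x i t ≤ M := by
    intro a ha hpast i t htmem
    have hbar : ∀ ε : ℝ, 0 < ε → x i t ≤ M + ε * (1 + (t - a)) := by
      intro ε hε
      have key : ∀ ⦃s⦄, s ∈ Set.Icc a (a + τ) → x i s ≤ M + ε * (1 + (s - a)) := by
        apply image_le_of_deriv_right_lt_deriv_boundary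
          (f := x i) (f' := g i) (B := fun s => M + ε * (1 + (s - a))) (B' := fun _ => ε)
        · exact (hxcont i).mono (fun s hs => by
            simp only [Set.mem_Icc, Set.mem_Ici] at hs ⊢; linarith [hs.1])
        · intro s hs
          exact hderivW i s (le_trans ha hs.1)
        · have : x i a ≤ M := hpast i a ⟨by linarith, le_refl a⟩
          simpa using by linarith
        · intro s
          have : HasDerivAt (fun s : ℝ => M + ε * (1 + (s - a))) (ε * 1) s := by
            exact ((((hasDerivAt_id s).sub_const a).const_add (1:ℝ)).const_mul ε).const_add M
          simpa using this
        · intro s hs hcontact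
          have hs0 : (0:ℝ) ≤ s := le_trans ha hs.1
          have hxis : M < x i s := by
            rw [hcontact]
            nlinarith [hs.1]
          have hterm : ∀ j ∈ Finset.univ.erase i, ψ i j s * (x j (s - τ) - x i s) ≤ 0 := by
            intro j _
            have hdel : x j (s - τ) ≤ M := by
              apply hpast j
              constructor
              · linarith [hs0]
              · linarith [hs.2, hτ]
            apply mul_nonpos_of_nonneg_of_nonpos (hψnn i j s hs0)
            linarith
          calc g i s ≤ 0 := Finset.sum_nonpos hterm
            _ < ε := hε
      exact key htmem
    -- let ε → 0
    have hpos : (0:ℝ) < 1 + (t - a) := by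
      have := htmem.1; linarith
    apply le_of_forall_pos_le_add
    intro δ hδ
    have := hbar (δ / (1 + (t - a))) (div_pos hδ hpos)
    rwa [div_mul_cancel₀ _ (ne_of_gt hpos)] at this
  -- induction over intervals [nτ, (n+1)τ]
  have main : ∀ n : ℕ, ∀ i : Fin N, ∀ s ∈ Set.Icc (-τ) ((n : ℝ) * τ), x i s ≤ M := by
    intro n
    induction n with
    | zero => simpa using hM0
    | succ n ih =>
      intro i s hs
      rcases le_or_gt s ((n : ℝ) * τ) with h | h
      · exact ih i s ⟨hs.1, h⟩
      · have hnτ : (0:ℝ) ≤ (n : ℝ) * τ := by positivity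
        apply step ((n : ℝ) * τ) hnτ ih i s
        constructor
        · exact le_of_lt h
        · have : ((n : ℝ) + 1) * τ = (n : ℝ) * τ + τ := by ring
          calc s ≤ ((n : ℕ) + 1 : ℕ) * τ := hs.2
            _ = (n : ℝ) * τ + τ := by push_cast; ring
  intro i t ht
  obtain ⟨n, hn⟩ := exists_nat_ge (t / τ)
  have : t ≤ (n : ℝ) * τ := by
    rw [div_le_iff₀ hτ] at hn
    linarith
  exact main n i t ⟨by linarith, this⟩

/-- Invariance lemma for the 1D Hegselmann-Krause model with transmission delay:
all opinions stay in the interval `[m, M]` determined by the initial data on `[-τ,0]`. -/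
theorem HK_delay_invariance (N : ℕ) (hN : 1 ≤ N) (τ : ℝ) (hτ : 0 < τ)
    (x : Fin N → ℝ → ℝ) (ψ : Fin N → Fin N → ℝ → ℝ)
    (hxcont : ∀ i, ContinuousOn (x i) (Set.Ici (-τ)))
    (hψcont : ∀ i j, Continuous (ψ i j))
    (hψnn : ∀ i j t, 0 ≤ t → 0 ≤ ψ i j t)
    (hrow : ∀ (i : Fin N) (t : ℝ), 0 ≤ t → ∑ j ∈ Finset.univ.erase i, ψ i j t ≤ 1)
    (hode : ∀ (i : Fin N) (t : ℝ), 0 < t → HasDerivAt (x i)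
      (∑ j ∈ Finset.univ.erase i, ψ i j t * (x j (t - τ) - x i t)) t)
    (m M : ℝ)
    (hm : IsLeast {v : ℝ | ∃ i : Fin N, ∃ s ∈ Set.Icc (-τ) 0, x i s = v} m)
    (hM : IsGreatest {v : ℝ | ∃ i : Fin N, ∃ s ∈ Set.Icc (-τ) 0, x i s = v} M) :
    ∀ (i : Fin N) (t : ℝ), 0 ≤ t → m ≤ x i t ∧ x i t ≤ M := by
  intro i t ht
  constructor
  · -- lower bound via the upper bound lemma applied to -x
    have hneg := HK_delay_upper N τ hτ (fun i t => -(x i t)) ψ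
      (fun i => (hxcont i).neg)
      hψcont hψnn
      (by
        intro i t ht'
        have h : HasDerivAt (-x i) (-∑ j ∈ Finset.univ.erase i, ψ i j t * (x j (t - τ) - x i t)) t :=
          (hode i t ht').neg
        convert h using 1
        · rfl
        rw [← Finset.sum_neg_distrib]
        exact Finset.sum_congr rfl fun j _ => by ring)
      (-m)
      (by
        intro i s hs
        have : m ≤ x i s := hm.2 ⟨i, s, hs, rfl⟩
        show -(x i s) ≤ -m
        linarith)
      i t ht
    simpa using hneg
  · exact HK_delay_upper N τ hτ x ψ hxcont hψcont hψnn hode M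
      (fun i s hs => hM.2 ⟨i, s, hs, rfl⟩) i t ht
end

section
/- Consider the one-dimensional delay system $\dot x_i(t) = \sum_{j \ne i} \psi_{ij}(t)(x_j(t-\tau)-x_i(t))$ with $\tau > 0$, weights satisfying $\underline\psi \le \psi_{ij}(t)$ for all $i \ne j$ and $\sum_{j \ne i}\psi_{ij}(t) \le 1$, where $\underline\psi > 0$. Let $m := \min_i \min_{s \in [-\tau,0]} x_i(s) > 0$ and $M := \max_i \max_{s \in [-\tau,0]} x_i(s)$. Fix indices $L$ and an interval $[\alpha_L,\omega_L] \subseteq [-\tau,0]$ of length $\sigma > 0$ such that $m \le x_L(t) \le \frac{m+M}{2}$ on $[\alpha_L,\omega_L]$. Then for every $i \ne L$, $x_i(\omega_L + \tau) \le (1 - \gamma_-) M$, where $\gamma_- := \frac{1}{2}\underline\psi(1 - e^{-\sigma})(1 - \frac{m}{M})$. -/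
/-- Step 1 of the diameter-shrinkage argument: if agent `L` stays in the lower half
`[m,(m+M)/2]` on a window `[α,ω] ⊆ [-τ,0]` of length `σ`, then every other agent satisfies
`xᵢ(ω+τ) ≤ (1-γ₋)M` with `γ₋ = ½ ψ̲ (1-e^{-σ})(1-m/M)`. -/
theorem HK_shrink_step1 (N : ℕ) (hN : 2 ≤ N) (τ ψlow m M σ : ℝ)
    (hτ : 0 < τ) (hψlow : 0 < ψlow) (hσ : 0 < σ)
    (x : Fin N → ℝ → ℝ) (ψw : Fin N → Fin N → ℝ → ℝ)
    (hlow : ∀ i j : Fin N, i ≠ j → ∀ t : ℝ, 0 ≤ t → ψlow ≤ ψw i j t)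
    (hrow : ∀ (i : Fin N) (t : ℝ), 0 ≤ t → ∑ j ∈ Finset.univ.erase i, ψw i j t ≤ 1)
    (hm : IsLeast {v : ℝ | ∃ i : Fin N, ∃ s ∈ Set.Icc (-τ) 0, x i s = v} m)
    (hM : IsGreatest {v : ℝ | ∃ i : Fin N, ∃ s ∈ Set.Icc (-τ) 0, x i s = v} M)
    (hmpos : 0 < m)
    (hconf : ∀ (i : Fin N) (t : ℝ), -τ ≤ t → m ≤ x i t ∧ x i t ≤ M)
    (hxcont : ∀ i, ContinuousOn (x i) (Set.Ici (-τ)))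
    (hode : ∀ (i : Fin N) (t : ℝ), 0 < t → HasDerivAt (x i)
      (∑ j ∈ Finset.univ.erase i, ψw i j t * (x j (t - τ) - x i t)) t)
    (L : Fin N) (α ω : ℝ) (hαω : ω - α = σ)
    (hsub : Set.Icc α ω ⊆ Set.Icc (-τ) 0)
    (hL : ∀ t ∈ Set.Icc α ω, m ≤ x L t ∧ x L t ≤ (m + M) / 2) :
    ∀ i : Fin N, i ≠ L →
      x i (ω + τ) ≤ (1 - (1 / 2) * ψlow * (1 - Real.exp (-σ)) * (1 - m / M)) * M := by
  intro i hiL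
  have hαle : α ≤ ω := by linarith
  have hαmem := hsub (Set.left_mem_Icc.2 hαle)
  have hωmem := hsub (Set.right_mem_Icc.2 hαle)
  have hmM : m ≤ M := hm.2 hM.1
  have hMpos : 0 < M := lt_of_lt_of_le hmpos hmM
  set c : ℝ := ψlow * (M - m) / 2 with hc
  have hcnn : 0 ≤ c := by
    apply div_nonneg _ (by norm_num)
    exact mul_nonneg hψlow.le (by linarith)
  set T0 : ℝ := α + τ with hT0def
  set T1 : ℝ := ω + τ with hT1def
  have hT0 : 0 ≤ T0 := by simp only [hT0def]; linarith [hαmem.1]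
  have hT01 : T0 < T1 := by simp only [hT0def, hT1def]; linarith
  set g : ℝ → ℝ := fun t => Real.exp t * (M - x i t - c) with hg
  -- derivative bound on the open interval
  have hgderiv : ∀ t ∈ Set.Ioo T0 T1,
      HasDerivAt g (Real.exp t * ((M - x i t - c) -
        ∑ j ∈ Finset.univ.erase i, ψw i j t * (x j (t - τ) - x i t))) t := by
    intro t ht
    have htpos : 0 < t := lt_of_le_of_lt hT0 ht.1
    have hx := hode i t htpos
    have h1 : HasDerivAt (fun t => M - x i t - c)
        (-(∑ j ∈ Finset.univ.erase i, ψw i j t * (x j (t - τ) - x i t))) t :=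
      (hx.const_sub M).sub_const c
    have h2 : HasDerivAt (fun t => Real.exp t * (M - x i t - c)) _ t := (Real.hasDerivAt_exp t).mul h1
    convert h2 using 1
    ring
  have hkey : ∀ t ∈ Set.Ioo T0 T1,
      (∑ j ∈ Finset.univ.erase i, ψw i j t * (x j (t - τ) - x i t))
        ≤ (M - x i t) - c := by
    intro t ht
    have htpos : 0 < t := lt_of_le_of_lt hT0 ht.1
    have htτ : t - τ ∈ Set.Icc α ω := by
      constructor
      · have := ht.1; simp only [hT0def] at this; linarith
      · have := ht.2; simp only [hT1def] at this; linarith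
    have hxi := hconf i t (by linarith)
    have hxL := hL (t - τ) htτ
    have hLmem : L ∈ Finset.univ.erase i := by
      simp [Ne.symm hiL]
    have hψL := hlow i L hiL t htpos.le
    -- split off the L term
    rw [← Finset.add_sum_erase _ _ hLmem]
    have hbound2 : ∑ j ∈ (Finset.univ.erase i).erase L, ψw i j t * (x j (t - τ) - x i t)
        ≤ ∑ j ∈ (Finset.univ.erase i).erase L, ψw i j t * (M - x i t) := by
      apply Finset.sum_le_sum
      intro j hj
      have hji : j ≠ i := Finset.ne_of_mem_erase (Finset.mem_of_mem_erase hj)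
      have hψj := hlow i j (Ne.symm hji) t htpos.le
      have hxj := hconf j (t - τ) (by have := htτ.1; linarith [hαmem.1])
      exact mul_le_mul_of_nonneg_left (by linarith [hxj.2]) (by linarith)
    have hbound1 : ψw i L t * (x L (t - τ) - x i t)
        ≤ ψw i L t * (M - x i t) - c := by
      have h1 : x L (t - τ) - x i t ≤ (M - x i t) - (M - m) / 2 := by
        have := hxL.2; linarith
      have h2 : ψw i L t * (x L (t - τ) - x i t)
          ≤ ψw i L t * ((M - x i t) - (M - m) / 2) :=
        mul_le_mul_of_nonneg_left h1 (by linarith)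
      nlinarith [mul_le_mul_of_nonneg_right hψL (show (0:ℝ) ≤ (M - m) / 2 by linarith)]
    have hrowsum : ∑ j ∈ Finset.univ.erase i, ψw i j t
        = ψw i L t + ∑ j ∈ (Finset.univ.erase i).erase L, ψw i j t :=
      (Finset.add_sum_erase _ _ hLmem).symm
    have hsum2 : ∑ j ∈ (Finset.univ.erase i).erase L, ψw i j t * (M - x i t)
        = (∑ j ∈ (Finset.univ.erase i).erase L, ψw i j t) * (M - x i t) := by
      rw [Finset.sum_mul]
    have hrowle := hrow i t htpos.le
    have hfinal : ψw i L t * (M - x i t)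
        + (∑ j ∈ (Finset.univ.erase i).erase L, ψw i j t) * (M - x i t)
        ≤ (M - x i t) := by
      have : (ψw i L t + ∑ j ∈ (Finset.univ.erase i).erase L, ψw i j t) ≤ 1 := by
        rw [← hrowsum]; exact hrowle
      nlinarith [hxi.2]
    linarith [hbound2, hbound1, hsum2 ▸ hbound2]
  -- monotonicity of g on [T0, T1]
  have hsubI : Set.Icc T0 T1 ⊆ Set.Ici (-τ) := by
    intro t ht
    have := ht.1
    simp only [Set.mem_Ici]
    linarith
  have hgcont : ContinuousOn g (Set.Icc T0 T1) := by
    apply Real.continuous_exp.continuousOn.mul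
    exact (continuousOn_const.sub ((hxcont i).mono hsubI)).sub continuousOn_const
  have hint : interior (Set.Icc T0 T1) = Set.Ioo T0 T1 := interior_Icc
  have hmono : MonotoneOn g (Set.Icc T0 T1) := by
    apply monotoneOn_of_deriv_nonneg (convex_Icc _ _) hgcont
    · intro t ht
      rw [hint] at ht
      exact (hgderiv t ht).differentiableAt.differentiableWithinAt
    · intro t ht
      rw [hint] at ht
      rw [(hgderiv t ht).deriv]
      have := hkey t ht
      have hE := Real.exp_pos t
      nlinarith
  have hg01 : g T0 ≤ g T1 :=
    hmono (Set.left_mem_Icc.2 hT01.le) (Set.right_mem_Icc.2 hT01.le) hT01.le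
  have hxT0 := hconf i T0 (by linarith)
  have hxT1 := hconf i T1 (by linarith)
  have hE : Real.exp (-σ) * Real.exp T1 = Real.exp T0 := by
    rw [← Real.exp_add]
    congr 1
    simp only [hT0def, hT1def]
    linarith
  have hu1 : c * (1 - Real.exp (-σ)) ≤ M - x i T1 := by
    have hET0 := Real.exp_pos T0
    have hET1 := Real.exp_pos T1
    simp only [hg] at hg01
    nlinarith [mul_nonneg hET0.le (show 0 ≤ M - x i T0 by linarith [hxT0.2]),
      mul_nonneg (mul_nonneg hcnn (Real.exp_pos (-σ)).le) hET1.le]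
  have hrhs : (1 - (1 / 2) * ψlow * (1 - Real.exp (-σ)) * (1 - m / M)) * M
      = M - (1 / 2) * ψlow * (1 - Real.exp (-σ)) * (M - m) := by
    field_simp
  rw [hrhs]
  have : x i T1 ≤ M - c * (1 - Real.exp (-σ)) := by linarith
  simp only [hT1def] at this
  simp only [hc] at this
  linarith
end

section
/- Under the assumptions of the shrinkage setting (one-dimensional delay Hegselmann-Krause system with $\psi_{ij}(t) \ge \underline\psi > 0$ for $i \ne j$, $\sum_{j\ne i}\psi_{ij}(t) \le 1$, trajectories in $[m,M]$ with $0<m\le M$, delay $\tau>0$), suppose $x_j(t-\tau) \le (1 - e^{-6\tau}\gamma_-)M$ for all $j \ne L$ and all $t \in [2\tau, 6\tau]$, where $\gamma_- \in (0,1)$. Then for $t \in [3\tau, 6\tau]$, $x_L(t) \le [1 - (1 - e^{-\underline\psi\tau}) e^{-6\tau}\gamma_-] M$. -/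
/-!
On `[2τ, 6τ]` every delayed neighbour of `L` lies below `κ = (1 - e^{-6τ}γ₋)M`, and the weights
towards them add up to at least `ψ̲`, so `x_L` is pulled towards `κ` at rate at least `ψ̲` while it
is above `κ`: `ẋ_L ≤ ψ̲ (κ - x_L)`. Comparison with the solution `κ + (M - κ) e^{-ψ̲ (t - 2τ)}` of
the linear equation, after a further time `τ`, gives the bound.
-/

open Set Finset Real

theorem image_le_add_mul_exp_of_deriv_right_le {f f' : ℝ → ℝ} {a b κ δ r : ℝ}
    (hr : 0 < r) (hδ : 0 ≤ δ) (hf : ContinuousOn f (Icc a b))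
    (hf' : ∀ t ∈ Ico a b, HasDerivWithinAt f (f' t) (Ici t) t) (ha : f a ≤ κ + δ)
    (bound : ∀ t ∈ Ico a b, κ < f t → f' t ≤ r * (κ - f t)) :
    ∀ ⦃t⦄, t ∈ Icc a b → f t ≤ κ + δ * exp (-(r * (t - a))) := by
  intro t ht
  refine le_of_forall_pos_le_add fun ε hε => ?_
  -- The barrier is raised by `ε` so that `f` meets it with a strictly smaller slope.
  set B : ℝ → ℝ := fun s => κ + ε + δ * exp (-(r * (s - a)))
  have hB : ∀ s, HasDerivAt B (-(r * (δ * exp (-(r * (s - a)))))) s := fun s => by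
    have h := ((((hasDerivAt_id' s).sub_const a).const_mul r).neg.exp.const_mul δ).const_add
      (κ + ε)
    simp only [Pi.neg_apply] at h
    exact h.congr_deriv (by ring)
  have hfB : f t ≤ B t := by
    refine image_le_of_deriv_right_lt_deriv_boundary hf hf' ?_ hB (fun s hs hfs => ?_) ht
    · simpa [B, add_right_comm] using ha.trans (le_add_of_nonneg_right hε.le)
    · have hexp : 0 ≤ δ * exp (-(r * (s - a))) := by positivity
      have hκ : κ < f s := by simp only [hfs, B]; linarith
      have := bound s hs hκ
      simp only [hfs, B] at this
      nlinarith [mul_pos hr hε]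
  simp only [B] at hfB
  linarith

theorem sum_mul_sub_le_mul_sub {ι : Type*} {s : Finset ι} {w y : ι → ℝ} {r κ z : ℝ}
    (hw : ∀ j ∈ s, 0 ≤ w j) (hr : r ≤ ∑ j ∈ s, w j) (hy : ∀ j ∈ s, y j ≤ κ) (hz : κ ≤ z) :
    ∑ j ∈ s, w j * (y j - z) ≤ r * (κ - z) :=
  calc ∑ j ∈ s, w j * (y j - z) ≤ ∑ j ∈ s, w j * (κ - z) :=
        sum_le_sum fun j hj => mul_le_mul_of_nonneg_left (by linarith [hy j hj]) (hw j hj)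
    _ = (∑ j ∈ s, w j) * (κ - z) := (sum_mul ..).symm
    _ ≤ r * (κ - z) := mul_le_mul_of_nonpos_right hr (by linarith)

theorem le_sum_erase_of_forall_ne_le {ι α : Type*} [Fintype ι] [DecidableEq ι]
    [AddCommMonoid α] [PartialOrder α] [IsOrderedAddMonoid α]
    (hcard : 1 < Fintype.card ι) {w : ι → α} {r : α} (i : ι) (hr : 0 ≤ r)
    (hw : ∀ j, j ≠ i → r ≤ w j) : r ≤ ∑ j ∈ univ.erase i, w j := by
  obtain ⟨j, hj⟩ := Fintype.exists_ne_of_one_lt_card hcard i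
  exact (hw j hj).trans <| single_le_sum (fun k hk => hr.trans (hw k (ne_of_mem_erase hk)))
    (mem_erase.2 ⟨hj, mem_univ j⟩)

theorem HK_shrink_step2_general (N : ℕ) (hN : 2 ≤ N) (τ ψlow m M γm : ℝ)
    (hτ : 0 < τ) (hψlow : 0 < ψlow) (hm : 0 < m) (hmM : m ≤ M)
    (hγm : γm ∈ Set.Ioo (0 : ℝ) 1)
    (x : Fin N → ℝ → ℝ) (ψw : Fin N → Fin N → ℝ → ℝ)
    (hlowb : ∀ i j : Fin N, i ≠ j → ∀ t : ℝ, 0 ≤ t → ψlow ≤ ψw i j t)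
    (hconf : ∀ (i : Fin N) (t : ℝ), -τ ≤ t → m ≤ x i t ∧ x i t ≤ M)
    (hode : ∀ (i : Fin N) (t : ℝ), 0 < t → HasDerivAt (x i)
      (∑ j ∈ Finset.univ.erase i, ψw i j t * (x j (t - τ) - x i t)) t)
    (L : Fin N)
    (hothers : ∀ j : Fin N, j ≠ L → ∀ t ∈ Set.Icc (2 * τ) (6 * τ),
      x j (t - τ) ≤ (1 - Real.exp (-(6 * τ)) * γm) * M) :
    ∀ t ∈ Set.Icc (3 * τ) (6 * τ),
      x L t ≤ (1 - (1 - Real.exp (-(ψlow * τ))) * Real.exp (-(6 * τ)) * γm) * M := by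
  intro t ht
  set κ := (1 - exp (-(6 * τ)) * γm) * M
  set δ := exp (-(6 * τ)) * γm * M
  have hδ : 0 ≤ δ := by have := hγm.1; have := hm.trans_le hmM; positivity
  have hpos : ∀ s ∈ Icc (2 * τ) (6 * τ), 0 < s := fun s hs => by linarith [hs.1]
  have hpull : ∀ s ∈ Ico (2 * τ) (6 * τ), κ < x L s →
      ∑ j ∈ univ.erase L, ψw L j s * (x j (s - τ) - x L s) ≤ ψlow * (κ - x L s) := by
    intro s hs hκ
    have hs0 := (hpos s (Ico_subset_Icc_self hs)).le
    refine sum_mul_sub_le_mul_sub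
      (fun j hj => hψlow.le.trans (hlowb L j (ne_of_mem_erase hj).symm s hs0))
      (le_sum_erase_of_forall_ne_le (by simp; omega) L hψlow.le
        fun j hj => hlowb L j hj.symm s hs0)
      (fun j hj => hothers j (ne_of_mem_erase hj) s (Ico_subset_Icc_self hs)) hκ.le
  have hcomp := image_le_add_mul_exp_of_deriv_right_le (f := x L) hψlow hδ
    (fun s hs => (hode L s (hpos s hs)).continuousAt.continuousWithinAt)
    (fun s hs => (hode L s (hpos s (Ico_subset_Icc_self hs))).hasDerivWithinAt)
    (by linarith [(hconf L (2 * τ) (by linarith)).2]) hpull ⟨by linarith [ht.1], ht.2⟩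
  have hdecay : exp (-(ψlow * (t - 2 * τ))) ≤ exp (-(ψlow * τ)) :=
    exp_le_exp.2 (by nlinarith [ht.1])
  calc x L t ≤ κ + δ * exp (-(ψlow * (t - 2 * τ))) := hcomp
    _ ≤ κ + δ * exp (-(ψlow * τ)) := by gcongr
    _ = _ := by ring

/-- Step 2 of the shrinkage argument: the lagging agent `L` inherits an improved upper bound
from all other agents after an additional time `τ`, degraded by the factor
`(1 - e^{-ψ̲ τ})`. -/
theorem HK_shrink_step2 (N : ℕ) (hN : 2 ≤ N) (τ ψlow m M γm : ℝ)
    (hτ : 0 < τ) (hψlow : 0 < ψlow) (hm : 0 < m) (hmM : m ≤ M)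
    (hγm : γm ∈ Set.Ioo (0 : ℝ) 1)
    (x : Fin N → ℝ → ℝ) (ψw : Fin N → Fin N → ℝ → ℝ)
    (hlowb : ∀ i j : Fin N, i ≠ j → ∀ t : ℝ, 0 ≤ t → ψlow ≤ ψw i j t)
    (hrow : ∀ (i : Fin N) (t : ℝ), 0 ≤ t → ∑ j ∈ Finset.univ.erase i, ψw i j t ≤ 1)
    (hconf : ∀ (i : Fin N) (t : ℝ), -τ ≤ t → m ≤ x i t ∧ x i t ≤ M)
    (hxcont : ∀ i, ContinuousOn (x i) (Set.Ici (-τ)))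
    (hode : ∀ (i : Fin N) (t : ℝ), 0 < t → HasDerivAt (x i)
      (∑ j ∈ Finset.univ.erase i, ψw i j t * (x j (t - τ) - x i t)) t)
    (L : Fin N)
    (hothers : ∀ j : Fin N, j ≠ L → ∀ t ∈ Set.Icc (2 * τ) (6 * τ),
      x j (t - τ) ≤ (1 - Real.exp (-(6 * τ)) * γm) * M) :
    ∀ t ∈ Set.Icc (3 * τ) (6 * τ),
      x L t ≤ (1 - (1 - Real.exp (-(ψlow * τ))) * Real.exp (-(6 * τ)) * γm) * M :=
  HK_shrink_step2_general N hN τ ψlow m M γm hτ hψlow hm hmM hγm x ψw hlowb hconf hode L hothers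
end

section
/- Consider the one-dimensional Hegselmann-Krause model with transmission delay, $\dot x_i(t) = \sum_{j \ne i}\frac{1}{N-1}\psi(|x_j(t-\tau)-x_i(t)|)(x_j(t-\tau)-x_i(t))$, $i=1,\dots,N$, $N \ge 2$, $\tau > 0$, with continuous initial data on $[-\tau,0]$, where $\psi : [0,\infty) \to (0,1]$ is continuous and strictly positive. Then the solution reaches global asymptotic consensus: $\lim_{t\to\infty}|x_i(t) - x_j(t)| = 0$ for all $i,j \in \{1,\dots,N\}$. -/
/-!
Upper bounds on a delay window propagate forward: an agent can only reach a level above all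
delayed states with nonpositive velocity, so by the method of steps the bound holds forever.
Once all agents stay in `[a, b]`, pick an agent at some time in the lower half of `[a, b]`
(otherwise mirror `x ↦ -x`). By linear Grönwall comparison it stays a fixed fraction of `b - a`
below `b` for a while, and through the delayed coupling, whose weights are at least
`μ = min ψ` on `[0, b - a]`, it drags every other agent a fixed fraction below `b` too. That gap
survives one more delay window, after which it is permanent; so `[a, b]` shrinks by a factor
`1 - θ` with `θ > 0` depending only on `N`, `τ`, `μ`, and iterating gives consensus.
-/

open Set Filter Real Topology

theorem le_add_exp_mul_of_hasDerivAt_le {f f' : ℝ → ℝ} {a b c L : ℝ}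
    (hf : ContinuousOn f (Icc a b)) (hf' : ∀ t ∈ Ioo a b, HasDerivAt f (f' t) t)
    (hle : ∀ t ∈ Ioo a b, f' t ≤ L * (c - f t)) {t : ℝ} (ht : t ∈ Icc a b) :
    f t ≤ c + exp (-(L * (t - a))) * (f a - c) := by
  -- `exp (L s) * (f s - c)` is nonincreasing
  set g : ℝ → ℝ := fun s => exp (L * s) * (f s - c)
  have hg' : ∀ s ∈ Ioo a b, HasDerivAt g (exp (L * s) * (L * (f s - c) + f' s)) s := by
    intro s hs
    have hexp : HasDerivAt (fun s => exp (L * s)) (exp (L * s) * L) s := by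
      simpa using ((hasDerivAt_id s).const_mul L).exp
    rw [show exp (L * s) * (L * (f s - c) + f' s)
        = exp (L * s) * L * (f s - c) + exp (L * s) * f' s by ring]
    exact hexp.mul ((hf' s hs).sub_const c)
  have hanti : AntitoneOn g (Icc a b) := by
    refine antitoneOn_of_hasDerivWithinAt_nonpos
      (f' := fun s => exp (L * s) * (L * (f s - c) + f' s)) (convex_Icc a b)
      ((continuous_exp.comp (continuous_const_mul L)).continuousOn.mul (hf.sub continuousOn_const))
      (fun s hs => ?_) (fun s hs => ?_) <;> rw [interior_Icc] at hs
    · exact (hg' s hs).hasDerivWithinAt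
    · have := hle s hs
      exact mul_nonpos_of_nonneg_of_nonpos (exp_pos _).le (by linarith)
  have hgt : exp (L * t) * (f t - c) ≤ exp (L * a) * (f a - c) :=
    hanti (left_mem_Icc.2 (ht.1.trans ht.2)) ht ht.1
  have hsplit : exp (L * a) = exp (L * t) * exp (-(L * (t - a))) := by
    rw [← exp_add]; ring_nf
  rw [hsplit, mul_assoc] at hgt
  linarith [le_of_mul_le_mul_left hgt (exp_pos _)]

noncomputable def hkVelocity (N : ℕ) (τ : ℝ) (ψ : ℝ → ℝ) (x : Fin N → ℝ → ℝ) (i : Fin N)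
    (t : ℝ) : ℝ :=
  ∑ j ∈ Finset.univ.erase i,
    (1 / ((N : ℝ) - 1)) * ψ |x j (t - τ) - x i t| * (x j (t - τ) - x i t)

structure IsHKSolution (N : ℕ) (τ : ℝ) (ψ : ℝ → ℝ) (x : Fin N → ℝ → ℝ) : Prop where
  continuousOn : ∀ i, ContinuousOn (x i) (Ici (-τ))
  hasDerivAt : ∀ i t, 0 < t → HasDerivAt (x i) (hkVelocity N τ ψ x i t) t

section

variable {N : ℕ} {τ : ℝ} {ψ : ℝ → ℝ} {x : Fin N → ℝ → ℝ}

theorem one_le_natCast_sub_one (hN : 2 ≤ N) : (1 : ℝ) ≤ (N : ℝ) - 1 := by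
  have : (2 : ℝ) ≤ N := by exact_mod_cast hN
  linarith

theorem hkVelocity_neg (i : Fin N) (t : ℝ) :
    hkVelocity N τ ψ (-x) i t = -hkVelocity N τ ψ x i t := by
  simp only [hkVelocity, Pi.neg_apply, ← Finset.sum_neg_distrib]
  refine Finset.sum_congr rfl fun j _ => ?_
  rw [neg_sub_neg, abs_sub_comm]
  ring

theorem hkVelocity_nonpos (hψ : ∀ s, 0 ≤ s → 0 ≤ ψ s) {i : Fin N} {t : ℝ}
    (hi : ∀ j, x j (t - τ) ≤ x i t) : hkVelocity N τ ψ x i t ≤ 0 := by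
  have hN : (0 : ℝ) ≤ 1 / ((N : ℝ) - 1) :=
    one_div_nonneg.2 (sub_nonneg.2 (Nat.one_le_cast.2 i.pos))
  exact Finset.sum_nonpos fun j _ =>
    mul_nonpos_of_nonneg_of_nonpos (mul_nonneg hN (hψ _ (abs_nonneg _))) (sub_nonpos.2 (hi j))

/-- Writing `x_j - x_i = (b - x_i) - (b - x_j)`, the weights `ψ ≤ 1` can only shrink the
first part, which sums to `b - x_i`. -/
theorem hkVelocity_le_sub_sum (hN : 2 ≤ N) (hψ : ∀ s, 0 ≤ s → ψ s ≤ 1) {i : Fin N} {t b : ℝ}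
    (hi : x i t ≤ b) :
    hkVelocity N τ ψ x i t ≤ (b - x i t) - ∑ j ∈ Finset.univ.erase i,
      ψ |x j (t - τ) - x i t| * (b - x j (t - τ)) / ((N : ℝ) - 1) := by
  have hN1 : (0 : ℝ) < (N : ℝ) - 1 := one_pos.trans_le (one_le_natCast_sub_one hN)
  have hcard : ((Finset.univ.erase i).card : ℝ) = (N : ℝ) - 1 := by
    rw [Finset.card_erase_of_mem (Finset.mem_univ i), Finset.card_univ, Fintype.card_fin,
      Nat.cast_sub (by omega), Nat.cast_one]
  have hsplit : b - x i t = ∑ _j ∈ Finset.univ.erase i, (b - x i t) / ((N : ℝ) - 1) := by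
    rw [Finset.sum_const, nsmul_eq_mul, hcard]
    field_simp
  rw [hsplit, ← Finset.sum_sub_distrib]
  refine Finset.sum_le_sum fun j _ => ?_
  have hψb : ψ |x j (t - τ) - x i t| * (b - x i t) ≤ b - x i t :=
    mul_le_of_le_one_left (sub_nonneg.2 hi) (hψ _ (abs_nonneg _))
  calc 1 / ((N : ℝ) - 1) * ψ |x j (t - τ) - x i t| * (x j (t - τ) - x i t)
      = (ψ |x j (t - τ) - x i t| * (b - x i t)
          - ψ |x j (t - τ) - x i t| * (b - x j (t - τ))) / ((N : ℝ) - 1) := by ring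
    _ ≤ ((b - x i t) - ψ |x j (t - τ) - x i t| * (b - x j (t - τ))) / ((N : ℝ) - 1) := by
      gcongr
    _ = _ := by ring

theorem hkVelocity_le_sub (hN : 2 ≤ N) (hψ : ∀ s, 0 ≤ s → ψ s ∈ Icc 0 1) {i : Fin N} {t b : ℝ}
    (hb : ∀ j, x j (t - τ) ≤ b) (hi : x i t ≤ b) : hkVelocity N τ ψ x i t ≤ b - x i t := by
  refine (hkVelocity_le_sub_sum hN (fun s hs => (hψ s hs).2) hi).trans (sub_le_self _ ?_)
  refine Finset.sum_nonneg fun j _ => div_nonneg ?_ (by linarith [one_le_natCast_sub_one hN])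
  exact mul_nonneg (hψ _ (abs_nonneg _)).1 (sub_nonneg.2 (hb j))

theorem hkVelocity_le_sub_of_ne (hN : 2 ≤ N) (hψ : ∀ s, 0 ≤ s → ψ s ∈ Icc 0 1) {i l : Fin N}
    (hli : l ≠ i) {t b μ : ℝ} (hb : ∀ j, x j (t - τ) ≤ b) (hi : x i t ≤ b)
    (hμ : μ ≤ ψ |x l (t - τ) - x i t|) :
    hkVelocity N τ ψ x i t ≤ (b - x i t) - μ * (b - x l (t - τ)) / ((N : ℝ) - 1) := by
  refine (hkVelocity_le_sub_sum hN (fun s hs => (hψ s hs).2) hi).trans (sub_le_sub_left ?_ _)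
  have hN1 : (0 : ℝ) ≤ (N : ℝ) - 1 := by linarith [one_le_natCast_sub_one hN]
  calc μ * (b - x l (t - τ)) / ((N : ℝ) - 1)
      ≤ ψ |x l (t - τ) - x i t| * (b - x l (t - τ)) / ((N : ℝ) - 1) := by
        gcongr
        exact sub_nonneg.2 (hb l)
    _ ≤ _ := Finset.single_le_sum
        (f := fun j => ψ |x j (t - τ) - x i t| * (b - x j (t - τ)) / ((N : ℝ) - 1))
        (fun j _ => div_nonneg (mul_nonneg (hψ _ (abs_nonneg _)).1 (sub_nonneg.2 (hb j))) hN1)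
        (Finset.mem_erase.2 ⟨hli, Finset.mem_univ l⟩)

/-- An agent in the lower half of `[a, b]` at time `T` stays `κ (b - a)` below `b` until
`T + τ + 1`, where `κ = e^{-(τ+1)}/2`. Acting with weight at least `μ / (N - 1)` on every other
agent during `[T + τ, T + τ + 1]`, its delayed state opens a gap of `hkGain N τ μ * (b - a)` below
`b` for all of them. -/
noncomputable def hkGain (N : ℕ) (τ μ : ℝ) : ℝ :=
  μ * (exp (-(τ + 1)) / 2) * (1 - exp (-1)) / ((N : ℝ) - 1)

/-- The gap `hkGain N τ μ * (b - a)` shrinks at most by the factor `e^{-τ}` over one further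
delay window. -/
noncomputable def hkContractionRate (N : ℕ) (τ μ : ℝ) : ℝ :=
  exp (-τ) * hkGain N τ μ

theorem hkGain_nonneg (hN : 2 ≤ N) {μ : ℝ} (hμ : 0 ≤ μ) : 0 ≤ hkGain N τ μ := by
  have hN1 : (0 : ℝ) < (N : ℝ) - 1 := by linarith [one_le_natCast_sub_one hN]
  have : 0 ≤ 1 - exp (-1) := sub_nonneg.2 (exp_le_one_iff.2 (by norm_num))
  unfold hkGain
  positivity

theorem hkGain_le (hN : 2 ≤ N) {μ : ℝ} (hμ₁ : μ ≤ 1) :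
    hkGain N τ μ ≤ exp (-(τ + 1)) / 2 := by
  have hN1 := one_le_natCast_sub_one hN
  have h₁ : 0 ≤ 1 - exp (-1) := sub_nonneg.2 (exp_le_one_iff.2 (by norm_num))
  have h₂ : 1 - exp (-1) ≤ 1 := by linarith [exp_pos (-1)]
  calc hkGain N τ μ ≤ 1 * (exp (-(τ + 1)) / 2) * 1 / 1 := by unfold hkGain; gcongr
    _ = exp (-(τ + 1)) / 2 := by ring

theorem hkContractionRate_pos (hN : 2 ≤ N) {μ : ℝ} (hμ : 0 < μ) :
    0 < hkContractionRate N τ μ := by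
  have hN1 : (0 : ℝ) < (N : ℝ) - 1 := by linarith [one_le_natCast_sub_one hN]
  have : 0 < 1 - exp (-1) := sub_pos.2 (exp_lt_one_iff.2 (by norm_num))
  unfold hkContractionRate hkGain
  positivity

theorem hkContractionRate_le_one (hN : 2 ≤ N) {μ : ℝ} (hτ : 0 ≤ τ) (hμ₀ : 0 ≤ μ)
    (hμ₁ : μ ≤ 1) : hkContractionRate N τ μ ≤ 1 := by
  have h₁ : exp (-τ) ≤ 1 := exp_le_one_iff.2 (by linarith)
  have h₂ : exp (-(τ + 1)) ≤ 1 := exp_le_one_iff.2 (by linarith)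
  calc hkContractionRate N τ μ ≤ 1 * (1 / 2) := by
        unfold hkContractionRate
        gcongr
        · exact hkGain_nonneg hN hμ₀
        · exact (hkGain_le hN hμ₁).trans (by linarith)
    _ ≤ 1 := by norm_num

namespace IsHKSolution

theorem neg (hx : IsHKSolution N τ ψ x) : IsHKSolution N τ ψ (-x) where
  continuousOn i := (hx.continuousOn i).neg
  hasDerivAt i t ht := by
    rw [hkVelocity_neg]
    exact (hx.hasDerivAt i t ht).neg

theorem continuousOn_Icc (hx : IsHKSolution N τ ψ x) (i : Fin N) {a b : ℝ} (ha : -τ ≤ a) :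
    ContinuousOn (x i) (Icc a b) :=
  (hx.continuousOn i).mono fun _ hs => ha.trans hs.1

theorem le_on_Icc_add_of_le_on_Icc_sub (hx : IsHKSolution N τ ψ x)
    (hψ : ∀ s, 0 ≤ s → 0 ≤ ψ s) (hτ : 0 < τ) {s B : ℝ} (hs : 0 < s)
    (hB : ∀ j, ∀ u ∈ Icc (s - τ) s, x j u ≤ B) (i : Fin N) : ∀ u ∈ Icc s (s + τ), x i u ≤ B := by
  intro u hu
  refine le_of_forall_pos_le_add fun δ hδ => ?_
  -- fence `x i` below the barrier `B + δ (t - s) / τ`, which it could only cross upwards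
  -- at a time where `x i` dominates every delayed state and so cannot increase
  have hbarrier : x i u ≤ B + δ / τ * (u - s) := by
    refine image_le_of_deriv_right_lt_deriv_boundary (f' := hkVelocity N τ ψ x i)
      (B := fun t => B + δ / τ * (t - s)) (B' := fun _ => δ / τ)
      (hx.continuousOn_Icc i (by linarith))
      (fun t ht => (hx.hasDerivAt i t (hs.trans_le ht.1)).hasDerivWithinAt)
      (by simpa using hB i s ⟨by linarith, le_rfl⟩)
      (fun t => by simpa using ((hasDerivAt_id t).sub_const s).const_mul (δ / τ) |>.const_add B)
      (fun t ht hcross => (hkVelocity_nonpos hψ fun j => ?_).trans_lt (by positivity)) hu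
    have := hB j (t - τ) ⟨by linarith [ht.1], by linarith [ht.2]⟩
    have : 0 ≤ δ / τ * (t - s) := mul_nonneg (by positivity) (by linarith [ht.1])
    linarith
  calc x i u ≤ B + δ / τ * (u - s) := hbarrier
    _ ≤ B + δ / τ * τ := by gcongr; linarith [hu.2]
    _ = B + δ := by rw [div_mul_cancel₀ δ hτ.ne']

theorem le_of_le_on_Icc (hx : IsHKSolution N τ ψ x) (hψ : ∀ s, 0 ≤ s → 0 ≤ ψ s) (hτ : 0 < τ)
    {t₀ B : ℝ} (ht₀ : 0 < t₀) (hB : ∀ j, ∀ u ∈ Icc (t₀ - τ) t₀, x j u ≤ B) :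
    ∀ j, ∀ t ≥ t₀ - τ, x j t ≤ B := by
  have hsteps : ∀ n : ℕ, ∀ j, ∀ u ∈ Icc (t₀ - τ) (t₀ + n * τ), x j u ≤ B := by
    intro n
    induction n with
    | zero => simpa using hB
    | succ n ih =>
      intro j u hu
      have hnτ : 0 ≤ (n : ℝ) * τ := by positivity
      rcases le_total u (t₀ + n * τ) with hu' | hu'
      · exact ih j u ⟨hu.1, hu'⟩
      · refine hx.le_on_Icc_add_of_le_on_Icc_sub hψ hτ (by positivity)
          (fun k v hv => ih k v ⟨by linarith [hv.1], hv.2⟩) j u ⟨hu', ?_⟩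
        push_cast at hu
        linarith [hu.2]
  intro j t ht
  obtain ⟨n, hn⟩ := exists_nat_ge ((t - t₀) / τ)
  rw [div_le_iff₀ hτ] at hn
  exact hsteps n j t ⟨ht, by linarith⟩

theorem ge_of_ge_on_Icc (hx : IsHKSolution N τ ψ x) (hψ : ∀ s, 0 ≤ s → 0 ≤ ψ s) (hτ : 0 < τ)
    {t₀ A : ℝ} (ht₀ : 0 < t₀) (hA : ∀ j, ∀ u ∈ Icc (t₀ - τ) t₀, A ≤ x j u) :
    ∀ j, ∀ t ≥ t₀ - τ, A ≤ x j t := fun j t ht =>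
  neg_le_neg_iff.1 (hx.neg.le_of_le_on_Icc hψ hτ ht₀ (fun k u hu => neg_le_neg (hA k u hu)) j t ht)

theorem exp_mul_sub_le_sub (hx : IsHKSolution N τ ψ x) (hN : 2 ≤ N)
    (hψ : ∀ s, 0 ≤ s → ψ s ∈ Icc 0 1) (hτ : 0 ≤ τ) {t₀ b : ℝ} (ht₀ : 0 ≤ t₀)
    (hb : ∀ j, ∀ t ≥ t₀ - τ, x j t ≤ b) (i : Fin N) {t : ℝ} (ht : t₀ ≤ t) :
    exp (-(t - t₀)) * (b - x i t₀) ≤ b - x i t := by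
  have := le_add_exp_mul_of_hasDerivAt_le (L := 1) (c := b)
    (hx.continuousOn_Icc i (by linarith)) (fun u hu => hx.hasDerivAt i u (by linarith [hu.1]))
    (fun u hu => by
      rw [one_mul]
      exact hkVelocity_le_sub hN hψ (fun j => hb j _ (by linarith [hu.1]))
        (hb i u (by linarith [hu.1])))
    ⟨ht, le_rfl⟩
  rw [one_mul] at this
  linarith

theorem mul_le_sub_of_le_midpoint (hx : IsHKSolution N τ ψ x) (hN : 2 ≤ N) (hτ : 0 < τ)
    (hψ : ∀ s, 0 ≤ s → ψ s ∈ Icc 0 1) {a b T : ℝ} (hT : 0 < T)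
    (hb : ∀ j, ∀ t ≥ T - τ, x j t ≤ b) {l : Fin N} (hl : x l T ≤ (a + b) / 2) {t : ℝ}
    (ht : t ∈ Icc T (T + τ + 1)) : exp (-(τ + 1)) / 2 * (b - a) ≤ b - x l t :=
  calc exp (-(τ + 1)) / 2 * (b - a) = exp (-(τ + 1)) * ((b - a) / 2) := by ring
    _ ≤ exp (-(τ + 1)) * (b - x l T) := by gcongr; linarith
    _ ≤ exp (-(t - T)) * (b - x l T) := by
      gcongr
      · exact sub_nonneg.2 (hb l T (by linarith))
      · linarith [ht.2]
    _ ≤ b - x l t := hx.exp_mul_sub_le_sub hN hψ hτ.le hT.le hb l ht.1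

theorem hkGain_mul_le_sub (hx : IsHKSolution N τ ψ x) (hN : 2 ≤ N) (hτ : 0 < τ)
    (hψ : ∀ s, 0 ≤ s → ψ s ∈ Icc 0 1) {μ a b T : ℝ} (hμ₀ : 0 ≤ μ)
    (hμ : ∀ s ∈ Icc 0 (b - a), μ ≤ ψ s) (hT : 0 < T) (hab : ∀ j, ∀ t ≥ T - τ, x j t ∈ Icc a b)
    {l : Fin N} (hl : x l T ≤ (a + b) / 2) (i : Fin N) :
    hkGain N τ μ * (b - a) ≤ b - x i (T + τ + 1) := by
  have hb : ∀ j, ∀ t ≥ T - τ, x j t ≤ b := fun j t ht => (hab j t ht).2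
  have hD : 0 ≤ b - a := by linarith [(hab l T (by linarith)).1, (hab l T (by linarith)).2]
  have hμ₁ : μ ≤ 1 := (hμ 0 ⟨le_rfl, hD⟩).trans (hψ 0 le_rfl).2
  have hlow : ∀ t ∈ Icc T (T + τ + 1), exp (-(τ + 1)) / 2 * (b - a) ≤ b - x l t :=
    fun t ht => hx.mul_le_sub_of_le_midpoint hN hτ hψ hT hb hl ht
  by_cases hli : l = i
  · subst hli
    exact (mul_le_mul_of_nonneg_right (hkGain_le hN hμ₁) hD).trans
      (hlow _ ⟨by linarith, le_rfl⟩)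
  set K := μ * (exp (-(τ + 1)) / 2 * (b - a)) / ((N : ℝ) - 1)
  have hvel : ∀ u ∈ Ioo (T + τ) (T + τ + 1), hkVelocity N τ ψ x i u ≤ 1 * (b - K - x i u) := by
    intro u hu
    have hxl := hlow (u - τ) ⟨by linarith [hu.1], by linarith [hu.2]⟩
    have hxl' := hab l (u - τ) (by linarith [hu.1])
    have hxi := hab i u (by linarith [hu.1])
    have hψl : μ ≤ ψ |x l (u - τ) - x i u| :=
      hμ _ ⟨abs_nonneg _,
        abs_sub_le_iff.2 ⟨by linarith [hxl'.2, hxi.1], by linarith [hxl'.1, hxi.2]⟩⟩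
    have hK : K ≤ μ * (b - x l (u - τ)) / ((N : ℝ) - 1) := by
      have : (0 : ℝ) ≤ (N : ℝ) - 1 := by linarith [one_le_natCast_sub_one hN]
      simp only [K]
      gcongr
    linarith [hkVelocity_le_sub_of_ne hN hψ hli (fun j => hb j _ (by linarith [hu.1]))
      hxi.2 hψl]
  have hgron := le_add_exp_mul_of_hasDerivAt_le (hx.continuousOn_Icc i (by linarith))
    (fun u hu => hx.hasDerivAt i u (by linarith [hu.1])) hvel
    (right_mem_Icc.2 (by linarith : T + τ ≤ T + τ + 1))
  rw [show 1 * (T + τ + 1 - (T + τ)) = 1 by ring] at hgron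
  have hstart : 0 ≤ exp (-1) * (b - x i (T + τ)) :=
    mul_nonneg (exp_pos _).le (sub_nonneg.2 (hb i _ (by linarith)))
  have : hkGain N τ μ * (b - a) = K * (1 - exp (-1)) := by unfold hkGain; ring
  linarith

theorem le_sub_hkContractionRate_mul (hx : IsHKSolution N τ ψ x) (hN : 2 ≤ N) (hτ : 0 < τ)
    (hψ : ∀ s, 0 ≤ s → ψ s ∈ Icc 0 1) {μ a b T : ℝ} (hμ₀ : 0 ≤ μ)
    (hμ : ∀ s ∈ Icc 0 (b - a), μ ≤ ψ s) (hT : 0 < T) (hab : ∀ j, ∀ t ≥ T - τ, x j t ∈ Icc a b)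
    {l : Fin N} (hl : x l T ≤ (a + b) / 2) :
    ∀ j, ∀ t ≥ T + τ + 1, x j t ≤ b - hkContractionRate N τ μ * (b - a) := by
  have hb : ∀ j, ∀ t ≥ T - τ, x j t ≤ b := fun j t ht => (hab j t ht).2
  have hD : 0 ≤ b - a := by linarith [(hab l T (by linarith)).1, (hab l T (by linarith)).2]
  have hkeep : ∀ j, ∀ t ∈ Icc (T + τ + 1) (T + τ + 1 + τ),
      x j t ≤ b - hkContractionRate N τ μ * (b - a) := by
    intro j t ht
    have hgain := hx.hkGain_mul_le_sub hN hτ hψ hμ₀ hμ hT hab hl j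
    calc x j t ≤ b - exp (-(t - (T + τ + 1))) * (b - x j (T + τ + 1)) := by
          linarith [hx.exp_mul_sub_le_sub hN hψ hτ.le (by positivity)
            (fun k s hs => hb k s (by linarith)) j ht.1]
      _ ≤ b - exp (-τ) * (hkGain N τ μ * (b - a)) := by
          gcongr
          · exact mul_nonneg (hkGain_nonneg hN hμ₀) hD
          · linarith [ht.2]
      _ = b - hkContractionRate N τ μ * (b - a) := by unfold hkContractionRate; ring
  intro j t ht
  exact hx.le_of_le_on_Icc (fun s hs => (hψ s hs).1) hτ (by positivity)
    (fun k u hu => hkeep k u ⟨by linarith [hu.1], hu.2⟩) j t (by linarith)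

theorem exists_Icc_contract (hx : IsHKSolution N τ ψ x) (hN : 2 ≤ N) (hτ : 0 < τ)
    (hψ : ∀ s, 0 ≤ s → ψ s ∈ Icc 0 1) {μ a b : ℝ} (hμ₀ : 0 ≤ μ)
    (hμ : ∀ s ∈ Icc 0 (b - a), μ ≤ ψ s) (h : ∀ᶠ t in atTop, ∀ j, x j t ∈ Icc a b) :
    ∃ a' b', b' - a' = (1 - hkContractionRate N τ μ) * (b - a) ∧
      ∀ᶠ t in atTop, ∀ j, x j t ∈ Icc a' b' := by
  obtain ⟨T₀, hT₀⟩ := eventually_atTop.1 h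
  set T := max T₀ 0 + τ
  have hT : 0 < T := add_pos_of_nonneg_of_pos (le_max_right _ _) hτ
  have hab : ∀ j, ∀ t ≥ T - τ, x j t ∈ Icc a b := fun j t ht =>
    hT₀ t ((le_max_left T₀ 0).trans (by linarith)) j
  have hlate := eventually_ge_atTop (T + τ + 1)
  set θ := hkContractionRate N τ μ
  rcases le_total (x ⟨0, by omega⟩ T) ((a + b) / 2) with hl | hl
  · refine ⟨a, b - θ * (b - a), by ring, ?_⟩
    filter_upwards [h, hlate] with t ht ht' j
    exact ⟨(ht j).1, hx.le_sub_hkContractionRate_mul hN hτ hψ hμ₀ hμ hT hab hl j t ht'⟩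
  · have hupper := hx.neg.le_sub_hkContractionRate_mul hN hτ hψ hμ₀ (a := -b) (b := -a)
      (by rwa [neg_sub_neg]) hT
      (fun j t ht => ⟨neg_le_neg (hab j t ht).2, neg_le_neg (hab j t ht).1⟩)
      (l := ⟨0, by omega⟩) (by simp only [Pi.neg_apply]; linarith)
    refine ⟨a + θ * (b - a), b, by ring, ?_⟩
    filter_upwards [h, hlate] with t ht ht' j
    have : -x j t ≤ -a - θ * (-a - -b) := hupper j t ht'
    exact ⟨by linarith, (ht j).2⟩

theorem exists_eventually_mem_Icc (hx : IsHKSolution N τ ψ x) (hψ : ∀ s, 0 ≤ s → 0 ≤ ψ s)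
    (hτ : 0 < τ) : ∃ a b, ∀ᶠ t in atTop, ∀ j, x j t ∈ Icc a b := by
  set K := ⋃ j, x j '' Icc 0 τ
  have hK : IsCompact K := isCompact_iUnion fun j =>
    isCompact_Icc.image_of_continuousOn (hx.continuousOn_Icc j (by linarith))
  obtain ⟨b, hb⟩ := hK.bddAbove
  obtain ⟨a, ha⟩ := hK.bddBelow
  have hwin : ∀ j, ∀ u ∈ Icc (τ - τ) τ, x j u ∈ K := fun j u hu =>
    mem_iUnion.2 ⟨j, u, by rwa [sub_self] at hu, rfl⟩
  refine ⟨a, b, eventually_atTop.2 ⟨0, fun t ht j => ⟨?_, ?_⟩⟩⟩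
  · exact hx.ge_of_ge_on_Icc hψ hτ hτ (fun k u hu => ha (hwin k u hu)) j t (by linarith)
  · exact hx.le_of_le_on_Icc hψ hτ hτ (fun k u hu => hb (hwin k u hu)) j t (by linarith)

theorem exists_eventually_mem_Icc_sub_lt (hx : IsHKSolution N τ ψ x) (hN : 2 ≤ N) (hτ : 0 < τ)
    (hψcont : ContinuousOn ψ (Ici 0)) (hψ : ∀ s, 0 ≤ s → ψ s ∈ Ioc 0 1) :
    ∀ ε > 0, ∃ a b, b - a < ε ∧ ∀ᶠ t in atTop, ∀ j, x j t ∈ Icc a b := by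
  have hψ' : ∀ s, 0 ≤ s → ψ s ∈ Icc 0 1 := fun s hs => Ioc_subset_Icc_self (hψ s hs)
  obtain ⟨a₀, b₀, h₀⟩ := hx.exists_eventually_mem_Icc (fun s hs => (hψ' s hs).1) hτ
  have hab₀ : a₀ ≤ b₀ := by
    obtain ⟨t, ht⟩ := h₀.exists
    exact (ht ⟨0, by omega⟩).1.trans (ht _).2
  obtain ⟨μ, hμ₀, hμ⟩ := isCompact_Icc.exists_forall_le' (hψcont.mono Icc_subset_Ici_self)
    (fun s hs => (hψ s hs.1).1)
  have hμ₁ : μ ≤ 1 := (hμ 0 ⟨le_rfl, sub_nonneg.2 hab₀⟩).trans (hψ 0 le_rfl).2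
  set r := 1 - hkContractionRate N τ μ
  have hr₀ : 0 ≤ r := sub_nonneg.2 (hkContractionRate_le_one hN hτ.le hμ₀.le hμ₁)
  have hr₁ : r < 1 := sub_lt_self _ (hkContractionRate_pos hN hμ₀)
  have hwidth : ∀ n : ℕ, ∃ a b, b - a = r ^ n * (b₀ - a₀) ∧
      ∀ᶠ t in atTop, ∀ j, x j t ∈ Icc a b := by
    intro n
    induction n with
    | zero => exact ⟨a₀, b₀, by ring, h₀⟩
    | succ n ih =>
      obtain ⟨a, b, hw, h⟩ := ih
      have hsmall : b - a ≤ b₀ - a₀ := by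
        rw [hw]
        exact mul_le_of_le_one_left (sub_nonneg.2 hab₀) (pow_le_one₀ hr₀ hr₁.le)
      obtain ⟨a', b', hw', h'⟩ := hx.exists_Icc_contract hN hτ hψ' hμ₀.le
        (fun s hs => hμ s ⟨hs.1, hs.2.trans hsmall⟩) h
      exact ⟨a', b', by rw [hw', hw, pow_succ]; ring, h'⟩
  intro ε hε
  have hlim : Tendsto (fun n : ℕ => r ^ n * (b₀ - a₀)) atTop (𝓝 0) := by
    simpa using (tendsto_pow_atTop_nhds_zero_of_lt_one hr₀ hr₁).mul_const (b₀ - a₀)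
  obtain ⟨n, hn⟩ := (hlim.eventually_lt_const hε).exists
  obtain ⟨a, b, hw, h⟩ := hwidth n
  exact ⟨a, b, hw ▸ hn, h⟩

end IsHKSolution

end

theorem tendsto_abs_sub_of_forall_eventually_mem_Icc {ι α : Type*} {l : Filter α}
    {f : ι → α → ℝ} (h : ∀ ε > 0, ∃ a b, b - a < ε ∧ ∀ᶠ t in l, ∀ j, f j t ∈ Icc a b)
    (i j : ι) : Tendsto (fun t => |f i t - f j t|) l (𝓝 0) := by
  rw [Metric.tendsto_nhds]
  intro ε hε
  obtain ⟨a, b, hab, hev⟩ := h ε hε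
  filter_upwards [hev] with t ht
  rw [Real.dist_eq, sub_zero, abs_abs, abs_sub_lt_iff]
  constructor <;> linarith [(ht i).1, (ht i).2, (ht j).1, (ht j).2]

/-- Main Theorem (1D, classical weights): the Hegselmann-Krause model with transmission
delay and weights `(1/(N-1)) ψ(|x_j(t-τ)-x_i(t)|)`, `ψ` continuous with values in `(0,1]`,
reaches global asymptotic consensus for any delay `τ > 0`. -/
theorem HK_delay_consensus_classical (N : ℕ) (hN : 2 ≤ N) (τ : ℝ) (hτ : 0 < τ)
    (ψ : ℝ → ℝ) (hψcont : ContinuousOn ψ (Set.Ici 0))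
    (hψ : ∀ s : ℝ, 0 ≤ s → ψ s ∈ Set.Ioc (0 : ℝ) 1)
    (x : Fin N → ℝ → ℝ)
    (hxcont : ∀ i, ContinuousOn (x i) (Set.Ici (-τ)))
    (hode : ∀ (i : Fin N) (t : ℝ), 0 < t → HasDerivAt (x i)
      (∑ j ∈ Finset.univ.erase i,
        (1 / ((N : ℝ) - 1)) * ψ |x j (t - τ) - x i t| * (x j (t - τ) - x i t)) t) :
    ∀ i j : Fin N,
      Filter.Tendsto (fun t => |x i t - x j t|) Filter.atTop (nhds 0) :=
  tendsto_abs_sub_of_forall_eventually_mem_Icc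
    ((IsHKSolution.mk hxcont hode).exists_eventually_mem_Icc_sub_lt hN hτ hψcont hψ)
end

section
/- Let $x : [-\tau, \infty) \to \mathbb{R}$ be continuous, differentiable on $(0,\infty)$, with $x(s) \le M$ for $s \in [-\tau, 0]$, and suppose that for each $\varepsilon > 0$ and all $t \in (0,\tau]$ one has $\dot x(t) \le c(t)\bigl((1+\varepsilon)M - x(t)\bigr)$ whenever $x(t) < (1+\varepsilon)M$, where $0 \le c(t) \le 1$. Then $x(t) \le M$ for all $t \in [0,\tau]$. -/
/-!
Where `x t > M`, every `K = (1 + ε) M > x t` is admissible in the hypothesis, so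
`ẋ(t) ≤ c(t) (K - x t)`; letting `K ↓ x t` gives `ẋ(t) ≤ 0`. A trajectory starting at or below
`M` whose derivative is nonpositive wherever it lies above `M` never exceeds `M`: were
`x t₁ > M`, then from the last time `t₀ < t₁` with `x t₀ ≤ M` on it is antitone, so
`x t₁ ≤ x t₀ ≤ M`.
-/

open Set Filter Topology

theorem nonpos_of_forall_lt_le_mul_sub {d c y : ℝ} (h : ∀ K, y < K → d ≤ c * (K - y)) :
    d ≤ 0 := by
  have hlim : Tendsto (fun K => c * (K - y)) (𝓝[>] y) (𝓝 0) := by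
    have : Continuous fun K => c * (K - y) := by fun_prop
    simpa using (this.tendsto y).mono_left nhdsWithin_le_nhds
  exact ge_of_tendsto hlim (eventually_nhdsWithin_of_forall h)

theorem image_le_of_deriv_nonpos_where_gt {f : ℝ → ℝ} {a b M : ℝ}
    (hf : ContinuousOn f (Icc a b)) (hdiff : ∀ t ∈ Ioo a b, DifferentiableAt ℝ f t)
    (ha : f a ≤ M) (hderiv : ∀ t ∈ Ioo a b, M < f t → deriv f t ≤ 0) :
    ∀ t ∈ Icc a b, f t ≤ M := by
  intro t₁ ht₁
  by_contra! hM
  set S := Icc a t₁ ∩ f ⁻¹' Iic M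
  have hS_closed : IsClosed S :=
    (hf.mono (Icc_subset_Icc_right ht₁.2)).preimage_isClosed_of_isClosed isClosed_Icc
      isClosed_Iic
  have hS_bdd : BddAbove S := ⟨t₁, fun s hs => hs.1.2⟩
  set t₀ := sSup S
  have ht₀ : t₀ ∈ S := hS_closed.csSup_mem ⟨a, ⟨le_rfl, ht₁.1⟩, ha⟩ hS_bdd
  have h_above : ∀ s ∈ Ioo t₀ t₁, M < f s := fun s hs => by
    by_contra! hs_le
    exact (le_csSup hS_bdd ⟨⟨ht₀.1.1.trans hs.1.le, hs.2.le⟩, hs_le⟩).not_gt hs.1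
  have hsub : Icc t₀ t₁ ⊆ Icc a b := Icc_subset_Icc ht₀.1.1 ht₁.2
  have h_mem : ∀ s ∈ Ioo t₀ t₁, s ∈ Ioo a b := fun s hs =>
    ⟨ht₀.1.1.trans_lt hs.1, hs.2.trans_le ht₁.2⟩
  have h_anti : AntitoneOn f (Icc t₀ t₁) := by
    apply antitoneOn_of_deriv_nonpos (convex_Icc t₀ t₁) (hf.mono hsub)
    · rw [interior_Icc]
      exact fun s hs => (hdiff s (h_mem s hs)).differentiableWithinAt
    · rw [interior_Icc]
      exact fun s hs => hderiv s (h_mem s hs) (h_above s hs)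
  have : f t₁ ≤ f t₀ :=
    h_anti (left_mem_Icc.2 ht₀.1.2) (right_mem_Icc.2 ht₀.1.2) ht₀.1.2
  exact (this.trans ht₀.2).not_gt hM

theorem HK_bootstrap_step_general (τ M : ℝ) (hM : 0 < M)
    (x c : ℝ → ℝ)
    (hxcont : ContinuousOn x (Set.Ici (-τ)))
    (hdiff : ∀ t : ℝ, 0 < t → DifferentiableAt ℝ x t)
    (hinit : ∀ s ∈ Set.Icc (-τ) 0, x s ≤ M)
    (hineq : ∀ ε : ℝ, 0 < ε → ∀ t ∈ Set.Ioc 0 τ, x t < (1 + ε) * M →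
      deriv x t ≤ c t * ((1 + ε) * M - x t)) :
    ∀ t ∈ Set.Icc 0 τ, x t ≤ M := by
  intro t ht
  have hτ : 0 ≤ τ := ht.1.trans ht.2
  refine image_le_of_deriv_nonpos_where_gt
    (hxcont.mono fun s hs => (neg_nonpos.2 hτ).trans hs.1) (fun s hs => hdiff s hs.1)
    (hinit 0 ⟨neg_nonpos.2 hτ, le_rfl⟩) (fun s hs hMs => ?_) t ht
  refine nonpos_of_forall_lt_le_mul_sub (c := c s) (y := x s) fun K hK => ?_
  have hK_eq : (1 + (K / M - 1)) * M = K := by field_simp; ring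
  have hε : 0 < K / M - 1 := by rw [sub_pos, one_lt_div hM]; linarith
  simpa only [hK_eq] using hineq _ hε s ⟨hs.1, hs.2.le⟩ (by rwa [hK_eq])

/-- The ε-relaxation bootstrap step of the invariance lemma: a trajectory bounded by `M > 0`
on `[-τ,0]` whose derivative satisfies `ẋ(t) ≤ c(t)((1+ε)M - x(t))` whenever
`x(t) < (1+ε)M`, for every `ε > 0` and `t ∈ (0,τ]`, cannot exceed `M` on `[0,τ]`. -/
theorem HK_bootstrap_step (τ M : ℝ) (hτ : 0 < τ) (hM : 0 < M)
    (x c : ℝ → ℝ)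
    (hxcont : ContinuousOn x (Set.Ici (-τ)))
    (hdiff : ∀ t : ℝ, 0 < t → DifferentiableAt ℝ x t)
    (hc : ∀ t ∈ Set.Ioc 0 τ, c t ∈ Set.Icc (0 : ℝ) 1)
    (hinit : ∀ s ∈ Set.Icc (-τ) 0, x s ≤ M)
    (hineq : ∀ ε : ℝ, 0 < ε → ∀ t ∈ Set.Ioc 0 τ, x t < (1 + ε) * M →
      deriv x t ≤ c t * ((1 + ε) * M - x t)) :
    ∀ t ∈ Set.Icc 0 τ, x t ≤ M :=
  HK_bootstrap_step_general τ M hM x c hxcont hdiff hinit hineq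
end

section
/- Consider the one-dimensional delayed Hegselmann-Krause system with normalized weights: $\dot x_i(t) = \sum_{j\ne i}\psi_{ij}(t)(x_j(t-\tau)-x_i(t))$ with $\psi_{ij}(t) = \psi(|x_j(t-\tau)-x_i(t)|)/\sum_{\ell\ne i}\psi(|x_\ell(t-\tau)-x_i(t)|)$, where $\psi : [0,\infty) \to (0,1]$ is continuous and strictly positive, $N \ge 2$, $\tau > 0$, with continuous initial data on $[-\tau, 0]$. Then $\sum_{j \ne i}\psi_{ij}(t) = 1$ for all $i$ and $t \ge 0$, and every solution reaches global asymptotic consensus: $\lim_{t\to\infty}|x_i(t)-x_j(t)| = 0$ for all $i,j$. -/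
open Set Filter Finset



lemma slope_nonneg_of_left_max {f : ℝ → ℝ} {d a t0 : ℝ} (h : HasDerivAt f d t0) (ha : a < t0)
    (hle : ∀ s ∈ Set.Ico a t0, f s ≤ f t0) : 0 ≤ d := by
  have h' : HasDerivWithinAt f d (Iio t0) t0 := h.hasDerivWithinAt
  rw [hasDerivWithinAt_iff_tendsto_slope] at h'
  have hself : t0 ∉ Iio t0 := by simp
  rw [diff_singleton_eq_self hself] at h'
  refine ge_of_tendsto h' ?_
  filter_upwards [Ioo_mem_nhdsLT_of_mem (show t0 ∈ Ioc a t0 from ⟨ha, le_refl _⟩)] with s hs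
  have h1 : f s ≤ f t0 := hle s ⟨hs.1.le, hs.2⟩
  have h2 : s - t0 < 0 := by linarith [hs.2]
  rw [slope_def_field, div_nonneg_iff]
  right
  exact ⟨by linarith, by linarith⟩

lemma gronwall_aux {f : ℝ → ℝ} {t0 t1 M κ : ℝ} (h01 : t0 ≤ t1)
    (hc : ContinuousOn f (Set.Icc t0 t1))
    (hd : ∀ t ∈ Set.Ioo t0 t1, ∃ d, HasDerivAt f d t ∧ d ≤ (M - f t) - κ) :
    f t1 ≤ M - κ + (f t0 - M + κ) * Real.exp (t0 - t1) := by
  set F : ℝ → ℝ := fun t => Real.exp t * (f t - M + κ) with hF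
  have hFanti : AntitoneOn F (Icc t0 t1) := by
    have hderiv : ∀ t ∈ interior (Icc t0 t1), DifferentiableAt ℝ F t ∧ deriv F t ≤ 0 := by
      intro t ht
      rw [interior_Icc] at ht
      obtain ⟨d, hdd, hdle⟩ := hd t ht
      have hFd : HasDerivAt F (Real.exp t * d + Real.exp t * (f t - M + κ)) t := by
        have h1 : HasDerivAt (fun s => f s - M + κ) d t := (hdd.sub_const M).add_const κ
        have h2 : HasDerivAt Real.exp (Real.exp t) t := Real.hasDerivAt_exp t
        have := h2.mul h1
        refine this.congr_deriv ?_
        ring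
      refine ⟨hFd.differentiableAt, ?_⟩
      rw [hFd.deriv]
      have h3 : Real.exp t * d ≤ Real.exp t * ((M - f t) - κ) :=
        mul_le_mul_of_nonneg_left hdle (Real.exp_pos t).le
      nlinarith [Real.exp_pos t]
    refine antitoneOn_of_deriv_nonpos (convex_Icc t0 t1) ?_ (fun t ht => (hderiv t ht).1.differentiableWithinAt) (fun t ht => (hderiv t ht).2)
    exact (Real.continuous_exp.continuousOn).mul ((hc.sub continuousOn_const).add continuousOn_const)
  have hle : F t1 ≤ F t0 := hFanti ⟨le_refl _, h01⟩ ⟨h01, le_refl _⟩ h01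
  have hexp : Real.exp (t0 - t1) = Real.exp t0 / Real.exp t1 := Real.exp_sub t0 t1
  have h4 : f t1 - M + κ ≤ (f t0 - M + κ) * (Real.exp t0 / Real.exp t1) := by
    rw [hF] at hle
    simp only at hle
    rw [mul_div_assoc'] at *
    rw [le_div_iff₀ (Real.exp_pos t1)]
    calc (f t1 - M + κ) * Real.exp t1 ≤ (f t0 - M + κ) * Real.exp t0 := by nlinarith [hle]
    _ = (f t0 - M + κ) * Real.exp t0 := by ring
  rw [hexp]
  linarith


lemma contOn_sup' {ι : Type*} {s : Finset ι} (hs : s.Nonempty)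
    {f : ι → ℝ → ℝ} {U : Set ℝ} (hf : ∀ i, ContinuousOn (f i) U) :
    ContinuousOn (fun t => s.sup' hs (fun i => f i t)) U := by
  classical
  induction hs using Finset.Nonempty.cons_induction with
  | singleton i => simpa using hf i
  | cons i s hi hs ih =>
      have heq : (fun t => (Finset.cons i s hi).sup' (Finset.cons_nonempty hi) (fun j => f j t))
          = fun t => f i t ⊔ s.sup' hs (fun j => f j t) := by
        funext t; exact Finset.sup'_cons (f := fun j => f j t) hs
      rw [heq]
      exact (hf i).sup ih

lemma barrier {N : ℕ} (hN : 2 ≤ N) {τ : ℝ} (hτ : 0 < τ)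
    (f : Fin N → ℝ → ℝ) (w : Fin N → Fin N → ℝ → ℝ)
    (hcont : ∀ i, ContinuousOn (f i) (Set.Ici (-τ)))
    (hode : ∀ i t, 0 < t → HasDerivAt (f i)
      (∑ j ∈ Finset.univ.erase i, w i j t * (f j (t - τ) - f i t)) t)
    (hwpos : ∀ i j t, 0 < t → 0 < w i j t)
    {T M : ℝ} (hT : 0 ≤ T)
    (hM : ∀ i, ∀ s ∈ Set.Icc (T - τ) T, f i s ≤ M) :
    ∀ i, ∀ t, T - τ ≤ t → f i t ≤ M := by
  classical
  have hne : (Finset.univ : Finset (Fin N)).Nonempty := ⟨⟨0, by omega⟩, Finset.mem_univ _⟩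
  have claim : ∀ ε > (0:ℝ), ∀ t, T - τ ≤ t → ∀ i, f i t < M + ε := by
    intro ε hε
    by_contra hcon
    push_neg at hcon
    obtain ⟨t', ht', i', hi'⟩ := hcon
    set F : ℝ → ℝ := fun t => Finset.univ.sup' hne (fun i => f i t) with hFdef
    have hFcont : ContinuousOn F (Set.Ici (-τ)) := contOn_sup' hne hcont
    have hFle : ∀ t, ∀ i : Fin N, f i t ≤ F t := fun t i => Finset.le_sup' (f := fun k => f k t) (Finset.mem_univ i)
    have hFT : F T ≤ M := Finset.sup'_le _ _ fun i _ => hM i T ⟨by linarith, le_refl _⟩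
    set B : Set ℝ := {t | T ≤ t ∧ M + ε ≤ F t} with hBdef
    have ht'T : T < t' := by
      by_contra hle
      push_neg at hle
      have := hM i' t' ⟨ht', hle⟩
      linarith
    have hBne : B.Nonempty := ⟨t', ht'T.le, le_trans hi' (hFle t' i')⟩
    have hBsub : B ⊆ Set.Ici T := fun t ht => ht.1
    have hBbdd : BddBelow B := ⟨T, fun t ht => ht.1⟩
    have hBclosed : IsClosed B := by
      have h1 : IsClosed (Set.Ici (-τ) ∩ F ⁻¹' Set.Ici (M + ε)) :=
        hFcont.preimage_isClosed_of_isClosed isClosed_Ici isClosed_Ici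
      have h2 : B = Set.Ici T ∩ (Set.Ici (-τ) ∩ F ⁻¹' Set.Ici (M + ε)) := by
        ext t
        constructor
        · rintro ⟨h3, h4⟩
          exact ⟨h3, by simp only [Set.mem_Ici]; linarith, h4⟩
        · rintro ⟨h3, _, h4⟩
          exact ⟨h3, h4⟩
      rw [h2]
      exact isClosed_Ici.inter h1
    set T₀ := sInf B with hT₀def
    have hT₀B : T₀ ∈ B := hBclosed.csInf_mem hBne hBbdd
    have hT₀T : T < T₀ := by
      rcases lt_or_eq_of_le hT₀B.1 with h | h
      · exact h
      · exfalso; have h2 := hT₀B.2; rw [← h] at h2; linarith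
    have hbelow : ∀ s ∈ Set.Ico (T - τ) T₀, ∀ k, f k s < M + ε := by
      intro s hs k
      rcases le_or_gt s T with h | h
      · linarith [hM k s ⟨hs.1, h⟩]
      · have hsB : s ∉ B := fun hsB => absurd (csInf_le hBbdd hsB) (by push_neg; exact hs.2)
        have : ¬ (M + ε ≤ F s) := fun hc => hsB ⟨h.le, hc⟩
        push_neg at this
        linarith [hFle s k]
    obtain ⟨i, _, hieq⟩ := Finset.exists_mem_eq_sup' hne (fun i => f i T₀)
    have hiT₀ : M + ε ≤ f i T₀ := by rw [← hieq]; exact hT₀B.2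
    have hmax : ∀ s ∈ Set.Ico (T - τ) T₀, f i s ≤ f i T₀ :=
      fun s hs => le_trans (hbelow s hs i).le (by linarith)
    have hT₀pos : 0 < T₀ := by linarith
    have hd := hode i T₀ hT₀pos
    have hdneg : (∑ j ∈ Finset.univ.erase i, w i j T₀ * (f j (T₀ - τ) - f i T₀)) < 0 := by
      have herase : (Finset.univ.erase i).Nonempty := by
        rw [← Finset.card_pos, Finset.card_erase_of_mem (Finset.mem_univ i)]
        simp only [Finset.card_univ, Fintype.card_fin]
        omega
      have hterm : ∀ j ∈ Finset.univ.erase i, w i j T₀ * (f j (T₀ - τ) - f i T₀) < 0 := by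
        intro j _
        apply mul_neg_of_pos_of_neg (hwpos i j T₀ hT₀pos)
        have := hbelow (T₀ - τ) ⟨by linarith, by linarith⟩ j
        linarith
      calc (∑ j ∈ Finset.univ.erase i, w i j T₀ * (f j (T₀ - τ) - f i T₀))
          < ∑ _j ∈ Finset.univ.erase i, (0:ℝ) := Finset.sum_lt_sum_of_nonempty herase hterm
        _ = 0 := Finset.sum_const_zero
    have hdpos := slope_nonneg_of_left_max hd (by linarith : T - τ < T₀) hmax
    linarith
  intro i t ht
  by_contra hgt
  push_neg at hgt
  have := claim (f i t - M) (by linarith) t ht i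
  linarith


lemma isGreatest_sSup_img {f : ℝ → ℝ} {A B : ℝ} (hAB : A ≤ B)
    (hf : ContinuousOn f (Set.Icc A B)) :
    IsGreatest (f '' Set.Icc A B) (sSup (f '' Set.Icc A B)) := by
  obtain ⟨c, hc, hmax⟩ := isCompact_Icc.exists_isMaxOn (Set.nonempty_Icc.2 hAB) hf
  have hg : IsGreatest (f '' Set.Icc A B) (f c) := by
    refine ⟨Set.mem_image_of_mem _ hc, ?_⟩
    rintro y ⟨s, hs, rfl⟩
    exact hmax hs
  rwa [hg.csSup_eq]

lemma isLeast_sInf_img {f : ℝ → ℝ} {A B : ℝ} (hAB : A ≤ B)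
    (hf : ContinuousOn f (Set.Icc A B)) :
    IsLeast (f '' Set.Icc A B) (sInf (f '' Set.Icc A B)) := by
  obtain ⟨c, hc, hmin⟩ := isCompact_Icc.exists_isMinOn (Set.nonempty_Icc.2 hAB) hf
  have hg : IsLeast (f '' Set.Icc A B) (f c) := by
    refine ⟨Set.mem_image_of_mem _ hc, ?_⟩
    rintro y ⟨s, hs, rfl⟩
    exact hmin hs
  rwa [hg.csInf_eq]


set_option maxHeartbeats 2000000 in
/-- Consensus for the delayed HK system with Motsch-Tadmor normalized weights: the rows of the
weight matrix sum exactly to one, and every solution reaches global asymptotic consensus. -/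
theorem HK_delay_consensus_normalized (N : ℕ) (hN : 2 ≤ N) (τ : ℝ) (hτ : 0 < τ)
    (ψ : ℝ → ℝ) (hψcont : ContinuousOn ψ (Set.Ici 0))
    (hψ : ∀ s : ℝ, 0 ≤ s → ψ s ∈ Set.Ioc (0 : ℝ) 1)
    (x : Fin N → ℝ → ℝ)
    (hxcont : ∀ i, ContinuousOn (x i) (Set.Ici (-τ)))
    (hode : ∀ (i : Fin N) (t : ℝ), 0 < t → HasDerivAt (x i)
      (∑ j ∈ Finset.univ.erase i,
        ψ |x j (t - τ) - x i t| /
          (∑ l ∈ Finset.univ.erase i, ψ |x l (t - τ) - x i t|) *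
            (x j (t - τ) - x i t)) t) :
    (∀ (i : Fin N) (t : ℝ), 0 ≤ t →
      ∑ j ∈ Finset.univ.erase i,
        ψ |x j (t - τ) - x i t| /
          (∑ l ∈ Finset.univ.erase i, ψ |x l (t - τ) - x i t|) = 1) ∧
    (∀ i j : Fin N,
      Filter.Tendsto (fun t => |x i t - x j t|) Filter.atTop (nhds 0)) := by
  classical
  have hne : (Finset.univ : Finset (Fin N)).Nonempty := ⟨⟨0, by omega⟩, Finset.mem_univ _⟩
  have herase : ∀ i : Fin N, (Finset.univ.erase i).Nonempty := by
    intro i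
    rw [← Finset.card_pos, Finset.card_erase_of_mem (Finset.mem_univ i)]
    simp only [Finset.card_univ, Fintype.card_fin]
    omega
  set w : Fin N → Fin N → ℝ → ℝ := fun i j t =>
    ψ |x j (t - τ) - x i t| / (∑ l ∈ Finset.univ.erase i, ψ |x l (t - τ) - x i t|) with hwdef
  have hSpos : ∀ (i : Fin N) (t : ℝ), 0 < ∑ l ∈ Finset.univ.erase i, ψ |x l (t - τ) - x i t| :=
    fun i t => Finset.sum_pos (fun l _ => (hψ _ (abs_nonneg _)).1) (herase i)
  have hwpos : ∀ (i j : Fin N) (t : ℝ), 0 < t → 0 < w i j t :=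
    fun i j t _ => div_pos (hψ _ (abs_nonneg _)).1 (hSpos i t)
  have hw1 : ∀ (i : Fin N) (t : ℝ), ∑ j ∈ Finset.univ.erase i, w i j t = 1 := by
    intro i t
    rw [hwdef]
    rw [← Finset.sum_div]
    exact div_self (hSpos i t).ne'
  have hodew : ∀ (i : Fin N) (t : ℝ), 0 < t → HasDerivAt (x i)
      (∑ j ∈ Finset.univ.erase i, w i j t * (x j (t - τ) - x i t)) t :=
    fun i t ht => hode i t ht
  refine ⟨fun i t _ => hw1 i t, ?_⟩
  -- window max/min functions
  set Mf : ℝ → ℝ := fun T => Finset.univ.sup' hne (fun i => sSup (x i '' Set.Icc (T - τ) T))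
    with hMfdef
  set mf : ℝ → ℝ := fun T => Finset.univ.inf' hne (fun i => sInf (x i '' Set.Icc (T - τ) T))
    with hmfdef
  have hIccsub : ∀ T : ℝ, 0 ≤ T → Set.Icc (T - τ) T ⊆ Set.Ici (-τ) := by
    intro T hT s hs
    simp only [Set.mem_Ici]
    have := hs.1
    linarith
  have hgreat : ∀ (i : Fin N) (T : ℝ), 0 ≤ T →
      IsGreatest (x i '' Set.Icc (T - τ) T) (sSup (x i '' Set.Icc (T - τ) T)) :=
    fun i T hT => isGreatest_sSup_img (by linarith) ((hxcont i).mono (hIccsub T hT))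
  have hleast : ∀ (i : Fin N) (T : ℝ), 0 ≤ T →
      IsLeast (x i '' Set.Icc (T - τ) T) (sInf (x i '' Set.Icc (T - τ) T)) :=
    fun i T hT => isLeast_sInf_img (by linarith) ((hxcont i).mono (hIccsub T hT))
  have hMub : ∀ T : ℝ, 0 ≤ T → ∀ i, ∀ s ∈ Set.Icc (T - τ) T, x i s ≤ Mf T := by
    intro T hT i s hs
    exact le_trans ((hgreat i T hT).2 (Set.mem_image_of_mem _ hs))
      (Finset.le_sup' (f := fun i => sSup (x i '' Set.Icc (T - τ) T)) (Finset.mem_univ i))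
  have hmlb : ∀ T : ℝ, 0 ≤ T → ∀ i, ∀ s ∈ Set.Icc (T - τ) T, mf T ≤ x i s := by
    intro T hT i s hs
    exact le_trans (Finset.inf'_le (f := fun i => sInf (x i '' Set.Icc (T - τ) T)) (Finset.mem_univ i))
      ((hleast i T hT).2 (Set.mem_image_of_mem _ hs))
  have hmmem : ∀ T : ℝ, 0 ≤ T → ∃ j, ∃ s ∈ Set.Icc (T - τ) T, x j s = mf T := by
    intro T hT
    obtain ⟨j, _, hj⟩ := Finset.exists_mem_eq_inf' hne (fun i => sInf (x i '' Set.Icc (T - τ) T))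
    obtain ⟨s, hs, hxs⟩ := (hleast j T hT).1
    exact ⟨j, s, hs, by rw [hxs, ← hj]⟩
  -- invariance
  have key1 : ∀ T : ℝ, 0 ≤ T → ∀ i, ∀ t : ℝ, T - τ ≤ t → x i t ≤ Mf T := by
    intro T hT i t ht
    exact barrier hN hτ x w hxcont hodew hwpos hT (hMub T hT) i t ht
  have key2 : ∀ T : ℝ, 0 ≤ T → ∀ i, ∀ t : ℝ, T - τ ≤ t → mf T ≤ x i t := by
    intro T hT
    have hcontg : ∀ i, ContinuousOn (fun t => -(x i t)) (Set.Ici (-τ)) := fun i => (hxcont i).neg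
    have hodeg : ∀ (i : Fin N) (t : ℝ), 0 < t → HasDerivAt (fun t => -(x i t))
        (∑ j ∈ Finset.univ.erase i, w i j t * (-(x j (t - τ)) - -(x i t))) t := by
      intro i t ht
      have h1 := (hodew i t ht).neg
      refine h1.congr_deriv ?_
      rw [← Finset.sum_neg_distrib]
      apply Finset.sum_congr rfl
      intro j _
      ring
    have hB := barrier hN hτ (fun i t => -(x i t)) w hcontg hodeg hwpos (M := -(mf T)) hT
      (fun i s hs => by have := hmlb T hT i s hs; linarith)
    intro i t ht
    have h2 := hB i t ht
    linarith
  -- monotonicity of window extremes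
  have hMant : ∀ T T' : ℝ, 0 ≤ T → T ≤ T' → Mf T' ≤ Mf T := by
    intro T T' hT hTT'
    apply Finset.sup'_le
    intro i _
    obtain ⟨s, hs, hxs⟩ := (hgreat i T' (by linarith)).1
    rw [← hxs]
    exact key1 T hT i s (by linarith [hs.1])
  have hmmono : ∀ T T' : ℝ, 0 ≤ T → T ≤ T' → mf T ≤ mf T' := by
    intro T T' hT hTT'
    apply Finset.le_inf'
    intro i _
    obtain ⟨s, hs, hxs⟩ := (hleast i T' (by linarith)).1
    rw [← hxs]
    exact key2 T hT i s (by linarith [hs.1])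
  have hDnn : ∀ T : ℝ, 0 ≤ T → mf T ≤ Mf T := by
    intro T hT
    have h1 := hmlb T hT ⟨0, by omega⟩ T ⟨by linarith, le_refl _⟩
    have h2 := hMub T hT ⟨0, by omega⟩ T ⟨by linarith, le_refl _⟩
    linarith
  -- global bounds
  have hzsub : (0:ℝ) - τ = -τ := by ring
  have hglb : ∀ (i : Fin N) (t : ℝ), -τ ≤ t → mf 0 ≤ x i t ∧ x i t ≤ Mf 0 := by
    intro i t ht
    constructor
    · exact key2 0 le_rfl i t (by linarith)
    · exact key1 0 le_rfl i t (by linarith)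
  have hab : mf 0 ≤ Mf 0 := hDnn 0 le_rfl
  -- lower bound on ψ over reachable distances
  obtain ⟨r0, hr0mem, hr0min⟩ := isCompact_Icc.exists_isMinOn
    (Set.nonempty_Icc.2 (by linarith : (0:ℝ) ≤ Mf 0 - mf 0))
    (hψcont.mono (fun r hr => hr.1))
  have hψminpos : 0 < ψ r0 := (hψ r0 hr0mem.1).1
  have hψlb : ∀ r : ℝ, 0 ≤ r → r ≤ Mf 0 - mf 0 → ψ r0 ≤ ψ r := fun r h1 h2 => hr0min ⟨h1, h2⟩
  set μ : ℝ := ψ r0 / N with hμdef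
  have hNpos : (0:ℝ) < N := by positivity
  have hμpos : 0 < μ := div_pos hψminpos hNpos
  have hμ1 : μ ≤ 1 := by
    rw [hμdef, div_le_one hNpos]
    have h1 := (hψ r0 hr0mem.1).2
    have h2 : (2:ℝ) ≤ N := by exact_mod_cast hN
    linarith
  have hwlb : ∀ (i j : Fin N) (t : ℝ), 0 ≤ t → μ ≤ w i j t := by
    intro i j t ht
    have habs : |x j (t - τ) - x i t| ≤ Mf 0 - mf 0 := by
      have h1 := hglb j (t - τ) (by linarith)
      have h2 := hglb i t (by linarith)
      rw [abs_le]
      constructor <;> [skip; skip] <;> [linarith [h1.1, h2.2]; linarith [h1.2, h2.1]]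
    have h1 : ψ r0 ≤ ψ |x j (t - τ) - x i t| := hψlb _ (abs_nonneg _) habs
    have h2 : (∑ l ∈ Finset.univ.erase i, ψ |x l (t - τ) - x i t|) ≤ N := by
      calc (∑ l ∈ Finset.univ.erase i, ψ |x l (t - τ) - x i t|)
          ≤ ∑ _l ∈ Finset.univ.erase i, (1:ℝ) :=
            Finset.sum_le_sum (fun l _ => (hψ _ (abs_nonneg _)).2)
        _ = ((Finset.univ.erase i).card : ℝ) := by rw [Finset.sum_const]; simp
        _ ≤ N := by
            rw [Finset.card_erase_of_mem (Finset.mem_univ i)]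
            simp only [Finset.card_univ, Fintype.card_fin]
            have : ((N - 1 : ℕ) : ℝ) ≤ (N : ℝ) := by
              have : N - 1 ≤ N := Nat.sub_le N 1
              exact_mod_cast this
            exact this
    rw [hwdef, hμdef]
    simp only
    exact div_le_div₀ (le_trans hψminpos.le h1) h1 (hSpos i t) h2
  -- derivative upper bound from a ceiling on delayed values
  have hderivub : ∀ (i : Fin N) (t Mt : ℝ), 0 < t → (∀ l : Fin N, x l (t - τ) ≤ Mt) →
      (∑ j ∈ Finset.univ.erase i, w i j t * (x j (t - τ) - x i t)) ≤ Mt - x i t := by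
    intro i t Mt ht hMt
    calc (∑ j ∈ Finset.univ.erase i, w i j t * (x j (t - τ) - x i t))
        ≤ ∑ j ∈ Finset.univ.erase i, w i j t * (Mt - x i t) :=
          Finset.sum_le_sum (fun j _ =>
            mul_le_mul_of_nonneg_left (by linarith [hMt j]) (hwpos i j t ht).le)
      _ = (∑ j ∈ Finset.univ.erase i, w i j t) * (Mt - x i t) := (Finset.sum_mul _ _ _).symm
      _ = Mt - x i t := by rw [hw1]; ring
  -- exponential decay toward a ceiling
  have hdecay : ∀ (i : Fin N) (t0 t1 Mt : ℝ), 0 ≤ t0 → t0 ≤ t1 →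
      (∀ (l : Fin N) (s : ℝ), t0 - τ ≤ s → s ≤ t1 - τ → x l s ≤ Mt) →
      x i t1 ≤ Mt + (x i t0 - Mt) * Real.exp (t0 - t1) := by
    intro i t0 t1 Mt ht0 ht01 hMt
    have hsub : Set.Icc t0 t1 ⊆ Set.Ici (-τ) := by
      intro s hs
      simp only [Set.mem_Ici]
      have := hs.1
      linarith
    have hg := gronwall_aux (f := x i) (M := Mt) (κ := 0) ht01 ((hxcont i).mono hsub) ?_
    · simpa using hg
    · intro t htIoo
      refine ⟨_, hodew i t (by linarith [htIoo.1]), ?_⟩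
      have := hderivub i t Mt (by linarith [htIoo.1])
        (fun l => hMt l (t - τ) (by linarith [htIoo.1]) (by linarith [htIoo.2]))
      linarith
  -- contraction constants
  have hexpτ : Real.exp (-τ) < 1 := by
    have h := Real.exp_lt_exp.2 (show -τ < 0 by linarith)
    rwa [Real.exp_zero] at h
  set c : ℝ := μ / 2 * Real.exp (-(4*τ)) * (1 - Real.exp (-τ)) with hcdef
  have hcpos : 0 < c := by
    rw [hcdef]
    apply mul_pos (mul_pos (by positivity) (Real.exp_pos _))
    linarith
  have hc1 : c < 1 := by
    rw [hcdef]
    have h1 : Real.exp (-(4*τ)) ≤ 1 := by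
      have h := Real.exp_le_exp.2 (show -(4*τ) ≤ 0 by linarith)
      rwa [Real.exp_zero] at h
    have h2 : 0 < Real.exp (-(4*τ)) := Real.exp_pos _
    have h3 : 0 < 1 - Real.exp (-τ) := by linarith
    have h4 : 1 - Real.exp (-τ) ≤ 1 := by linarith [Real.exp_pos (-τ)]
    have h5 : μ/2 * Real.exp (-(4*τ)) ≤ 1/2 := by nlinarith [hμ1, hμpos]
    have h6 : 0 < μ/2 * Real.exp (-(4*τ)) := by positivity
    nlinarith
  set q : ℝ := max (1/2) (1 - c) with hqdef
  have hq0 : (0:ℝ) ≤ q := le_trans (by norm_num) (le_max_left _ _)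
  have hq1 : q < 1 := max_lt (by norm_num) (by linarith)
  -- the contraction step
  have hcontract : ∀ T : ℝ, 0 ≤ T → Mf (T + 5*τ) - mf (T + 5*τ) ≤ q * (Mf T - mf T) := by
    intro T hT
    obtain ⟨j, s0, hs0, hjs0⟩ := hmmem (T + τ) (by linarith)
    have hs0T : T ≤ s0 := by linarith [hs0.1]
    have hs0ub : s0 ≤ T + τ := hs0.2
    have hs0nn : 0 ≤ s0 := by linarith
    have hm'm : mf T ≤ mf (T + τ) := hmmono T (T+τ) hT (by linarith)
    have hm'M : mf (T + τ) ≤ Mf T := by rw [← hjs0]; exact key1 T hT j s0 (by linarith)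
    have hDnnT : 0 ≤ Mf T - mf T := by linarith [hDnn T hT]
    have hq' : (1:ℝ)/2 ≤ q := le_max_left _ _
    have hq'' : 1 - c ≤ q := le_max_right _ _
    rcases le_or_gt (Mf T - mf (T + τ)) ((Mf T - mf T)/2) with hcase | hcase
    · -- easy case : nearly merged already at time T+τ
      have h1 : Mf (T + 5*τ) ≤ Mf (T + τ) := hMant (T+τ) (T+5*τ) (by linarith) (by linarith)
      have h2 : mf (T + τ) ≤ mf (T + 5*τ) := hmmono (T+τ) (T+5*τ) (by linarith) (by linarith)
      have h3 : Mf (T+τ) ≤ Mf T := hMant T (T+τ) hT (by linarith)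
      nlinarith [mul_nonneg (sub_nonneg.2 hq') hDnnT]
    · -- main case
      have hA : ∀ t : ℝ, s0 ≤ t → x j t ≤ Mf T + (mf (T+τ) - Mf T) * Real.exp (s0 - t) := by
        intro t ht
        have h := hdecay j s0 t (Mf T) (by linarith) ht
          (fun l s h1 h2 => key1 T hT l s (by linarith))
        rwa [hjs0] at h
      set ε : ℝ := (Mf T - mf (T+τ)) * (μ * Real.exp (-(2*τ)) * (1 - Real.exp (-τ))) with hεdef
      have hεnn : 0 ≤ ε := by
        apply mul_nonneg (by linarith)
        apply mul_nonneg (mul_nonneg hμpos.le (Real.exp_pos _).le)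
        linarith
      have hBall : ∀ i : Fin N, x i (s0 + 2*τ) ≤ Mf T - ε := by
        intro i
        by_cases hij : i = j
        · subst hij
          have h1 := hA (s0 + 2*τ) (by linarith)
          have h2 : s0 - (s0 + 2*τ) = -(2*τ) := by ring
          rw [h2] at h1
          have h3 : μ * (1 - Real.exp (-τ)) ≤ 1 := by nlinarith [Real.exp_pos (-τ), hμ1, hμpos]
          have h4 : 0 < Real.exp (-(2*τ)) := Real.exp_pos _
          have hA0 : 0 ≤ Mf T - mf (T+τ) := by linarith
          have h6 : (Mf T - mf (T+τ)) * Real.exp (-(2*τ)) * (μ * (1 - Real.exp (-τ)))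
              ≤ (Mf T - mf (T+τ)) * Real.exp (-(2*τ)) * 1 :=
            mul_le_mul_of_nonneg_left h3 (mul_nonneg hA0 h4.le)
          have h5 : (Mf T - mf (T+τ)) * (μ * Real.exp (-(2*τ)) * (1 - Real.exp (-τ)))
              ≤ (Mf T - mf (T+τ)) * Real.exp (-(2*τ)) := by
            calc (Mf T - mf (T+τ)) * (μ * Real.exp (-(2*τ)) * (1 - Real.exp (-τ)))
                = (Mf T - mf (T+τ)) * Real.exp (-(2*τ)) * (μ * (1 - Real.exp (-τ))) := by ring
              _ ≤ (Mf T - mf (T+τ)) * Real.exp (-(2*τ)) * 1 := h6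
              _ = (Mf T - mf (T+τ)) * Real.exp (-(2*τ)) := by ring
          rw [hεdef]
          linarith
        · have hjne : j ∈ Finset.univ.erase i :=
            Finset.mem_erase.2 ⟨fun h => hij h.symm, Finset.mem_univ _⟩
          set κ : ℝ := μ * ((Mf T - mf (T+τ)) * Real.exp (-τ)) with hκdef
          have hκnn : 0 ≤ κ := by
            apply mul_nonneg hμpos.le (mul_nonneg (by linarith) (Real.exp_pos _).le)
          have hsub2 : Set.Icc (s0 + τ) (s0 + 2*τ) ⊆ Set.Ici (-τ) := by
            intro s hs
            simp only [Set.mem_Ici]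
            linarith [hs.1]
          have hgd : ∀ t ∈ Set.Ioo (s0+τ) (s0+2*τ),
              ∃ d, HasDerivAt (x i) d t ∧ d ≤ (Mf T - x i t) - κ := by
            intro t htIoo
            have htpos : 0 < t := by linarith [htIoo.1]
            have htnn : 0 ≤ t := htpos.le
            refine ⟨_, hodew i t htpos, ?_⟩
            have hxjd : x j (t - τ) ≤ Mf T - (Mf T - mf (T+τ)) * Real.exp (-τ) := by
              have h5 := hA (t - τ) (by linarith [htIoo.1])
              have h6 : Real.exp (-τ) ≤ Real.exp (s0 - (t - τ)) :=
                Real.exp_le_exp.2 (by linarith [htIoo.2])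
              nlinarith [h5, h6]
            have hothers : ∀ l ∈ (Finset.univ.erase i).erase j, x l (t - τ) ≤ Mf T :=
              fun l _ => key1 T hT l (t - τ) (by linarith [htIoo.1])
            calc (∑ l ∈ Finset.univ.erase i, w i l t * (x l (t - τ) - x i t))
                = (∑ l ∈ (Finset.univ.erase i).erase j, w i l t * (x l (t - τ) - x i t))
                    + w i j t * (x j (t - τ) - x i t) :=
                  (Finset.sum_erase_add _ _ hjne).symm
              _ ≤ (∑ l ∈ (Finset.univ.erase i).erase j, w i l t * (Mf T - x i t))
                    + w i j t * ((Mf T - (Mf T - mf (T+τ)) * Real.exp (-τ)) - x i t) := by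
                  apply add_le_add
                  · exact Finset.sum_le_sum (fun l hl =>
                      mul_le_mul_of_nonneg_left (by linarith [hothers l hl]) (hwpos i l t htpos).le)
                  · exact mul_le_mul_of_nonneg_left (by linarith [hxjd]) (hwpos i j t htpos).le
              _ = ((∑ l ∈ (Finset.univ.erase i).erase j, w i l t) + w i j t) * (Mf T - x i t)
                    - w i j t * ((Mf T - mf (T+τ)) * Real.exp (-τ)) := by
                  rw [← Finset.sum_mul]
                  ring
              _ = (Mf T - x i t) - w i j t * ((Mf T - mf (T+τ)) * Real.exp (-τ)) := by
                  rw [Finset.sum_erase_add _ _ hjne, hw1]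
                  ring
              _ ≤ (Mf T - x i t) - κ := by
                  have h7 : κ ≤ w i j t * ((Mf T - mf (T+τ)) * Real.exp (-τ)) := by
                    rw [hκdef]
                    exact mul_le_mul_of_nonneg_right (hwlb i j t htnn)
                      (mul_nonneg (by linarith) (Real.exp_pos _).le)
                  linarith
          have hg := gronwall_aux (f := x i) (M := Mf T) (κ := κ)
            (by linarith : s0 + τ ≤ s0 + 2*τ) ((hxcont i).mono hsub2) hgd
          have hxi1 : x i (s0+τ) ≤ Mf T := key1 T hT i (s0+τ) (by linarith)
          have hexpeq : (s0+τ) - (s0+2*τ) = -τ := by ring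
          rw [hexpeq] at hg
          have h8 : Real.exp (-(2*τ)) ≤ Real.exp (-τ) := Real.exp_le_exp.2 (by linarith)
          have h9 : 0 < Real.exp (-τ) := Real.exp_pos _
          have hA0 : 0 ≤ Mf T - mf (T+τ) := by linarith
          have h10 : 0 ≤ 1 - Real.exp (-τ) := by linarith
          rw [hκdef] at hg
          have h11 : (x i (s0+τ) - Mf T + μ * ((Mf T - mf (T+τ)) * Real.exp (-τ))) * Real.exp (-τ)
              ≤ (μ * ((Mf T - mf (T+τ)) * Real.exp (-τ))) * Real.exp (-τ) :=
            mul_le_mul_of_nonneg_right (by linarith [hxi1]) h9.le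
          have hstep : x i (s0+2*τ) ≤ Mf T
              - μ * ((Mf T - mf (T+τ)) * Real.exp (-τ)) * (1 - Real.exp (-τ)) := by
            nlinarith [hg, h11]
          have h13 : (μ * (Mf T - mf (T+τ)) * (1 - Real.exp (-τ))) * Real.exp (-(2*τ))
              ≤ (μ * (Mf T - mf (T+τ)) * (1 - Real.exp (-τ))) * Real.exp (-τ) :=
            mul_le_mul_of_nonneg_left h8 (mul_nonneg (mul_nonneg hμpos.le hA0) h10)
          have h12 : (Mf T - mf (T+τ)) * (μ * Real.exp (-(2*τ)) * (1 - Real.exp (-τ)))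
              ≤ μ * ((Mf T - mf (T+τ)) * Real.exp (-τ)) * (1 - Real.exp (-τ)) := by
            calc (Mf T - mf (T+τ)) * (μ * Real.exp (-(2*τ)) * (1 - Real.exp (-τ)))
                = (μ * (Mf T - mf (T+τ)) * (1 - Real.exp (-τ))) * Real.exp (-(2*τ)) := by ring
              _ ≤ (μ * (Mf T - mf (T+τ)) * (1 - Real.exp (-τ))) * Real.exp (-τ) := h13
              _ = μ * ((Mf T - mf (T+τ)) * Real.exp (-τ)) * (1 - Real.exp (-τ)) := by ring
          rw [hεdef]
          linarith [hstep, h12]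
      -- propagate the gap forward to the window ending at s0 + 4τ
      have hMf4 : Mf (s0 + 4*τ) ≤ Mf T - ε * Real.exp (-(2*τ)) := by
        apply Finset.sup'_le
        intro i _
        obtain ⟨s, hs, hxs⟩ := (hgreat i (s0 + 4*τ) (by linarith)).1
        rw [← hxs]
        have hdec := hdecay i (s0 + 2*τ) s (Mf T) (by linarith) (by linarith [hs.1])
          (fun l s' h1 h2 => key1 T hT l s' (by linarith))
        have hE1 : Real.exp (-(2*τ)) ≤ Real.exp ((s0 + 2*τ) - s) :=
          Real.exp_le_exp.2 (by linarith [hs.2])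
        have hBi := hBall i
        nlinarith [Real.exp_pos ((s0+2*τ) - s), hεnn, hdec]
      have hfinal1 : Mf (T + 5*τ) ≤ Mf T - ε * Real.exp (-(2*τ)) :=
        le_trans (hMant (s0+4*τ) (T+5*τ) (by linarith) (by linarith)) hMf4
      have hfinal2 : mf T ≤ mf (T + 5*τ) := hmmono T (T+5*τ) hT (by linarith)
      have hεD : c * (Mf T - mf T) ≤ ε * Real.exp (-(2*τ)) := by
        have he4 : Real.exp (-(2*τ)) * Real.exp (-(2*τ)) = Real.exp (-(4*τ)) := by
          rw [← Real.exp_add]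
          ring_nf
        have h10 : 0 ≤ 1 - Real.exp (-τ) := by linarith
        have hco : 0 ≤ μ * Real.exp (-(4*τ)) * (1 - Real.exp (-τ)) :=
          mul_nonneg (mul_nonneg hμpos.le (Real.exp_pos _).le) h10
        have h14 : (μ * Real.exp (-(4*τ)) * (1 - Real.exp (-τ))) * ((Mf T - mf T)/2)
            ≤ (μ * Real.exp (-(4*τ)) * (1 - Real.exp (-τ))) * (Mf T - mf (T+τ)) :=
          mul_le_mul_of_nonneg_left (by linarith) hco
        calc c * (Mf T - mf T)
            = (μ * Real.exp (-(4*τ)) * (1 - Real.exp (-τ))) * ((Mf T - mf T)/2) := by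
              rw [hcdef]; ring
          _ ≤ (μ * Real.exp (-(4*τ)) * (1 - Real.exp (-τ))) * (Mf T - mf (T+τ)) := h14
          _ = (Mf T - mf (T+τ)) * (μ * (Real.exp (-(2*τ)) * Real.exp (-(2*τ))) * (1 - Real.exp (-τ))) := by
              rw [he4]; ring
          _ = ε * Real.exp (-(2*τ)) := by rw [hεdef]; ring
      nlinarith [hfinal1, hfinal2, hεD, hDnnT, mul_nonneg (sub_nonneg.2 hq'') hDnnT]
  -- iterate and conclude
  have hDseq : ∀ n : ℕ, Mf (5*τ*n) - mf (5*τ*n) ≤ q^n * (Mf 0 - mf 0) := by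
    intro n
    induction n with
    | zero => simp
    | succ k ih =>
        have h1 : (5*τ*((k:ℕ)+1:ℕ) : ℝ) = 5*τ*(k:ℕ) + 5*τ := by push_cast; ring
        have h2 := hcontract (5*τ*(k:ℕ)) (by positivity)
        rw [h1]
        calc Mf (5*τ*(k:ℕ) + 5*τ) - mf (5*τ*(k:ℕ) + 5*τ)
            ≤ q * (Mf (5*τ*(k:ℕ)) - mf (5*τ*(k:ℕ))) := h2
          _ ≤ q * (q^k * (Mf 0 - mf 0)) := mul_le_mul_of_nonneg_left ih hq0
          _ = q^(k+1) * (Mf 0 - mf 0) := by ring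
  intro i j
  rw [Metric.tendsto_atTop]
  intro ε' hε'
  have hqt : Tendsto (fun n : ℕ => q^n * (Mf 0 - mf 0)) atTop (nhds 0) := by
    have h1 := tendsto_pow_atTop_nhds_zero_of_lt_one hq0 hq1
    simpa using h1.mul_const (Mf 0 - mf 0)
  obtain ⟨n, hn⟩ := (hqt.eventually (gt_mem_nhds hε')).exists
  refine ⟨5*τ*n + 1, fun t ht => ?_⟩
  have hTn : (0:ℝ) ≤ 5*τ*n := by positivity
  have h1 := key1 (5*τ*n) hTn i t (by linarith)
  have h2 := key2 (5*τ*n) hTn i t (by linarith)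
  have h3 := key1 (5*τ*n) hTn j t (by linarith)
  have h4 := key2 (5*τ*n) hTn j t (by linarith)
  have h5 := hDseq n
  rw [Real.dist_eq, sub_zero, abs_abs, abs_sub_lt_iff]
  constructor <;> linarith [hn]
end
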